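/- arXiv:1205.7062 — 6 statements merged into one kernel-verified Lean document; each statement's English description precedes it below -/
import Mathlib

section
/- Fix A > 0. There exist n₀ and A' (depending only on A) such that for every integer n ≥ n₀ the following holds: if F is analytic on the closed disc D = { t ∈ ℂ : |t| ≤ (log n)^{1/2} }, satisfies |F(t)| ≤ 2√n for all t ∈ D, and satisfies |F(t) e^{−t²/2} − 1| ≤ A n^{-1} (log n)^{3/2} for all real t ∈ [−(log n)^{1/2}, (log n)^{1/2}], then |F(t) e^{−t²/2} − 1| ≤ A' n^{-1/2} (log n)^{3/2} for all complex t with |t| ≤ (1/7)(log n)^{1/2}. In particular, this applies to F(t) = E{ e^{t X_n} } for a sequence of real random variables X_n whose moment generating functions satisfy these hypotheses. -/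
/-!
Put `G(z) = F(z) e^{-z²/2} - 1` and `R = √(log n)`. Then `G` is holomorphic on the disc of
radius `R`, `|G| ≤ m := A n⁻¹ (log n)^{3/2}` on the real diameter and `|G| ≤ 2n + 1` on the whole
disc, and a two-constants estimate `|G| ≤ C m^{3/4} M^{1/4}` on the disc of radius `R / 7` gives
the claim.

On the upper half disc the estimate is the maximum principle for `G · (1 - (z/R)²) · Φ`, where
`Φ(z) = exp (i c log ((R + z)/(R - z)))` with `c = (2/π) log (M/m)`, so that
`|Φ(z)| = (M/m)^{-ω(z)}` for the harmonic measure `ω(z) = (2/π) arg ((R + z)/(R - z))` of the arc: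
`ω` vanishes on the diameter, equals `1` on the arc and is at most `1/4` when `|z| ≤ R/7`. The
factor `1 - (z/R)²` kills the discontinuity of `Φ` at the corners `±R`. The lower half disc
follows by the reflection `z ↦ conj (G (conj z))`.
-/

open Real Complex Metric Set Filter Topology
open scoped ComplexConjugate

lemma normSq_le_sq_of_norm_le {z : ℂ} {R : ℝ} (hz : ‖z‖ ≤ R) : normSq z ≤ R ^ 2 := by
  rw [normSq_eq_norm_sq]
  exact pow_le_pow_left₀ (norm_nonneg z) hz 2

lemma DiffContOnCl.conj_conj_ball {G : ℂ → ℂ} {R : ℝ} (hG : DiffContOnCl ℂ G (ball 0 R)) :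
    DiffContOnCl ℂ (conj ∘ G ∘ conj) (ball 0 R) := by
  have hmaps : MapsTo conj (ball (0 : ℂ) R) (ball 0 R) := fun w hw => by
    simpa [mem_ball_zero_iff] using hw
  refine ⟨fun w hw => ?_, continuous_conj.comp_continuousOn
    (hG.continuousOn.comp continuous_conj.continuousOn (hmaps.closure continuous_conj))⟩
  exact (differentiableAt_conj_conj_iff.2 (hG.differentiableAt isOpen_ball (hmaps hw)))
    |>.differentiableWithinAt

namespace TwoConstants

noncomputable def cayley (R : ℝ) (z : ℂ) : ℂ := (R + z) / (R - z)

noncomputable def arcWeight (R c : ℝ) (z : ℂ) : ℂ :=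
  Complex.exp (I * c * Complex.log (cayley R z))

noncomputable def cornerFactor (R : ℝ) (z : ℂ) : ℂ := 1 - (z / R) ^ 2

variable {R c : ℝ} {z : ℂ}

lemma cayley_re (R : ℝ) (z : ℂ) :
    (cayley R z).re = (R ^ 2 - normSq z) / normSq (R - z) := by
  simp only [cayley, div_re, add_re, sub_re, ofReal_re, add_im, sub_im, ofReal_im, normSq_apply]
  rw [← add_div]
  ring

lemma cayley_im (R : ℝ) (z : ℂ) :
    (cayley R z).im = 2 * R * z.im / normSq (R - z) := by
  simp only [cayley, div_im, add_re, sub_re, ofReal_re, add_im, sub_im, ofReal_im, normSq_apply]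
  rw [div_sub_div_same]
  ring

lemma cayley_re_nonneg (hz : ‖z‖ ≤ R) : 0 ≤ (cayley R z).re := by
  rw [cayley_re]
  exact div_nonneg (by linarith [normSq_le_sq_of_norm_le hz]) (normSq_nonneg _)

lemma arg_cayley_nonneg (hR : 0 ≤ R) (hz : 0 ≤ z.im) : 0 ≤ arg (cayley R z) := by
  rw [arg_nonneg_iff, cayley_im]
  exact div_nonneg (by positivity) (normSq_nonneg _)

lemma cayley_mem_slitPlane (hz : ‖z‖ ≤ R) (hzR : z ≠ R) (hzR' : z ≠ -R) :
    cayley R z ∈ slitPlane := by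
  have hne : cayley R z ≠ 0 :=
    div_ne_zero (fun h => hzR' (by linear_combination h)) (sub_ne_zero.2 (Ne.symm hzR))
  rw [mem_slitPlane_iff]
  by_contra! h
  exact hne (Complex.ext (le_antisymm h.1 (cayley_re_nonneg hz)) h.2)

lemma arg_cayley_of_norm_eq (hR : 0 < R) (hz : ‖z‖ = R) (him : 0 < z.im) :
    arg (cayley R z) = π / 2 := by
  have hN : 0 < normSq (R - z) := normSq_pos.2 (sub_ne_zero.2 fun h => by simp [← h] at him)
  rw [arg_eq_pi_div_two_iff, cayley_re, cayley_im, normSq_eq_norm_sq, hz]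
  exact ⟨by simp, by positivity⟩

lemma seven_div_twentyFour_le_sin_pi_div_eight : 7 / 24 ≤ Real.sin (π / 8) := by
  have h2 : √2 ≤ 3 / 2 := (Real.sqrt_le_left (by norm_num)).2 (by norm_num)
  have : 7 / 12 ≤ √(2 - √2) := (Real.le_sqrt (by norm_num) (by linarith)).2 (by linarith)
  rw [Real.sin_pi_div_eight]
  linarith

lemma arg_cayley_le_pi_div_eight (hR : 0 < R) (hz : ‖z‖ ≤ R / 7) :
    arg (cayley R z) ≤ π / 8 := by
  set v := cayley R z
  have hzR : ‖z‖ < R := by linarith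
  have hN : 0 < normSq (R - z) :=
    normSq_pos.2 (sub_ne_zero.2 fun h => by simp [← h, abs_of_pos hR] at hzR)
  have hnormSq : normSq z ≤ R ^ 2 / 49 := by
    have := normSq_le_sq_of_norm_le hz
    linarith
  have him : z.im ≤ R / 7 := (le_abs_self _).trans ((abs_im_le_norm z).trans hz)
  have hre : 0 < v.re := by
    rw [cayley_re]
    exact div_pos (by nlinarith) hN
  have hcone : 24 * v.im ≤ 7 * v.re := by
    rw [cayley_re, cayley_im, ← mul_div_assoc, ← mul_div_assoc]
    exact div_le_div_of_nonneg_right (by nlinarith) hN.le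
  have hv : v.im / ‖v‖ ≤ 7 / 24 := by
    rw [div_le_iff₀ (norm_pos_iff.2 fun h => by simp [h] at hre)]
    nlinarith [re_le_norm v]
  rw [arg_of_re_nonneg hre.le, ← Real.arcsin_sin (x := π / 8) (by linarith [pi_pos])
    (by linarith [pi_pos])]
  exact Real.arcsin_le_arcsin (hv.trans seven_div_twentyFour_le_sin_pi_div_eight)

lemma norm_arcWeight (R c : ℝ) (z : ℂ) :
    ‖arcWeight R c z‖ = Real.exp (-(c * arg (cayley R z))) := by
  rw [arcWeight, norm_exp]
  congr 1
  simp only [mul_re, mul_im, I_re, I_im, ofReal_re, ofReal_im, log_im]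
  ring

lemma norm_arcWeight_le_one (hR : 0 ≤ R) (hc : 0 ≤ c) (hz : 0 ≤ z.im) :
    ‖arcWeight R c z‖ ≤ 1 := by
  rw [norm_arcWeight, Real.exp_le_one_iff, neg_nonpos]
  exact mul_nonneg hc (arg_cayley_nonneg hR hz)

lemma continuousAt_arcWeight (hzR : z ≠ R) (hz : cayley R z ∈ slitPlane) :
    ContinuousAt (arcWeight R c) z := by
  have : ContinuousAt (cayley R) z :=
    (continuousAt_const.add continuousAt_id).div (continuousAt_const.sub continuousAt_id)
      (sub_ne_zero.2 (Ne.symm hzR))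
  exact (continuousAt_const.mul ((continuousAt_clog hz).comp this)).cexp

lemma differentiableAt_arcWeight (hzR : z ≠ R) (hz : cayley R z ∈ slitPlane) :
    DifferentiableAt ℂ (arcWeight R c) z := by
  have : DifferentiableAt ℂ (cayley R) z :=
    (differentiableAt_const _).add differentiableAt_id |>.div
      ((differentiableAt_const _).sub differentiableAt_id) (sub_ne_zero.2 (Ne.symm hzR))
  exact ((differentiableAt_const _).mul (this.clog hz)).cexp

lemma differentiable_cornerFactor : Differentiable ℂ (cornerFactor R) := by
  unfold cornerFactor
  fun_prop

lemma norm_cornerFactor_le (hR : 0 < R) (hz : z ∈ closedBall 0 R) : ‖cornerFactor R z‖ ≤ 2 := by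
  have : ‖z / R‖ ≤ 1 := by
    rw [norm_div, norm_real, Real.norm_of_nonneg hR.le, div_le_one hR]
    exact mem_closedBall_zero_iff.1 hz
  calc ‖cornerFactor R z‖ ≤ ‖(1 : ℂ)‖ + ‖z / R‖ ^ 2 := by rw [← norm_pow]; exact norm_sub_le _ _
    _ ≤ 2 := by rw [norm_one]; nlinarith [norm_nonneg (z / R)]

lemma closure_upperHalfDisc_subset :
    closure (ball (0 : ℂ) R ∩ {w | 0 < w.im}) ⊆ closedBall 0 R ∩ {w | 0 ≤ w.im} :=
  (closure_inter_subset_inter_closure _ _).trans <|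
    inter_subset_inter closure_ball_subset_closedBall
      (closure_lt_subset_le continuous_const continuous_im)

variable {G : ℂ → ℂ} {m M : ℝ}

lemma continuousOn_cornerFactor_mul_arcWeight (hR : 0 < R) (hc : 0 ≤ c)
    (hG : ContinuousOn G (closedBall 0 R)) (hM : ∀ z ∈ closedBall 0 R, ‖G z‖ ≤ M) :
    ContinuousOn (fun w => cornerFactor R w * (G w * arcWeight R c w))
      (closedBall 0 R ∩ {w | 0 ≤ w.im}) := by
  have hκ : Continuous (cornerFactor R) := differentiable_cornerFactor.continuous
  rintro w ⟨hwR, hw⟩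
  by_cases hcorner : w = R ∨ w = -R
  · have hzero : cornerFactor R w = 0 := by
      have hR0 : (R : ℂ) ≠ 0 := ofReal_ne_zero.2 hR.ne'
      rcases hcorner with rfl | rfl <;> simp [cornerFactor, hR0]
    have hbdd : IsBoundedUnder (· ≤ ·) (𝓝[closedBall 0 R ∩ {w | 0 ≤ w.im}] w)
        ((‖·‖) ∘ fun u => G u * arcWeight R c u) := by
      refine isBoundedUnder_of_eventually_le (a := M) ?_
      filter_upwards [self_mem_nhdsWithin] with u ⟨huR, hu⟩
      rw [Function.comp_apply, norm_mul]
      exact (mul_le_of_le_one_right (norm_nonneg _)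
        (norm_arcWeight_le_one hR.le hc hu)).trans (hM u huR)
    have hκw := (hκ.tendsto w).mono_left (nhdsWithin_le_nhds (s := closedBall 0 R ∩ {w | 0 ≤ w.im}))
    rw [hzero] at hκw
    simp only [ContinuousWithinAt, hzero, zero_mul]
    exact hκw.zero_mul_isBoundedUnder_le hbdd
  · rw [not_or] at hcorner
    have hslit := cayley_mem_slitPlane (mem_closedBall_zero_iff.1 hwR) hcorner.1 hcorner.2
    exact hκ.continuousWithinAt.mul (((hG w hwR).mono inter_subset_left).mul
      (continuousAt_arcWeight hcorner.1 hslit).continuousWithinAt)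

lemma norm_cornerFactor_mul_arcWeight_le_of_mem_frontier (hR : 0 < R) (hc : 0 ≤ c)
    (hM : ∀ z ∈ closedBall 0 R, ‖G z‖ ≤ M) (hm : ∀ x : ℝ, |x| ≤ R → ‖G x‖ ≤ m)
    (harc : M * Real.exp (-(c * (π / 2))) ≤ m) {w : ℂ}
    (hw : w ∈ frontier (ball (0 : ℂ) R ∩ {w | 0 < w.im})) :
    ‖cornerFactor R w * (G w * arcWeight R c w)‖ ≤ 2 * m := by
  rw [(isOpen_ball.inter (isOpen_lt continuous_const continuous_im)).frontier_eq] at hw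
  obtain ⟨⟨hwR, hwim⟩, hwU⟩ := And.intro (closure_upperHalfDisc_subset hw.1) hw.2
  rw [norm_mul, norm_mul]
  refine mul_le_mul (norm_cornerFactor_le hR hwR) ?_ (by positivity) zero_le_two
  rcases (show (0 : ℝ) ≤ w.im from hwim).eq_or_lt with hreal | hupper
  · have hw' : w = (w.re : ℂ) := Complex.ext rfl (by simp [← hreal])
    have hre : |w.re| ≤ R := (abs_re_le_norm w).trans (mem_closedBall_zero_iff.1 hwR)
    exact (mul_le_of_le_one_right (norm_nonneg _) (norm_arcWeight_le_one hR.le hc hwim)).trans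
      (hw' ▸ hm w.re hre)
  · have hnorm : ‖w‖ = R := le_antisymm (mem_closedBall_zero_iff.1 hwR)
      (not_lt.1 fun h => hwU ⟨mem_ball_zero_iff.2 h, hupper⟩)
    rw [norm_arcWeight, arg_cayley_of_norm_eq hR hnorm hupper]
    exact (mul_le_mul_of_nonneg_right (hM w hwR) (Real.exp_pos _).le).trans harc

lemma norm_cornerFactor_mul_le_of_upperHalfDisc (hR : 0 < R) (hc : 0 ≤ c)
    (hG : DiffContOnCl ℂ G (ball 0 R)) (hM : ∀ z ∈ closedBall 0 R, ‖G z‖ ≤ M)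
    (hm : ∀ x : ℝ, |x| ≤ R → ‖G x‖ ≤ m) (harc : M * Real.exp (-(c * (π / 2))) ≤ m)
    (hz : ‖z‖ < R) (him : 0 < z.im) :
    ‖cornerFactor R z‖ * (‖G z‖ * Real.exp (-(c * arg (cayley R z)))) ≤ 2 * m := by
  set U := ball (0 : ℂ) R ∩ {w | 0 < w.im}
  have hdiff : DiffContOnCl ℂ (fun w => cornerFactor R w * (G w * arcWeight R c w)) U := by
    refine ⟨fun w hw => DifferentiableAt.differentiableWithinAt ?_,
      (continuousOn_cornerFactor_mul_arcWeight hR hc hG.continuousOn_ball hM).mono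
        closure_upperHalfDisc_subset⟩
    have hwR : ‖w‖ < R := mem_ball_zero_iff.1 hw.1
    have hne : w ≠ R := fun h => by simp [h, abs_of_pos hR] at hwR
    have hne' : w ≠ -R := fun h => by simp [h, abs_of_pos hR] at hwR
    exact differentiable_cornerFactor.differentiableAt.mul
      ((hG.differentiableAt isOpen_ball hw.1).mul
        (differentiableAt_arcWeight hne (cayley_mem_slitPlane hwR.le hne hne')))
  have := Complex.norm_le_of_forall_mem_frontier_norm_le (isBounded_ball.subset inter_subset_left)
    hdiff (fun w hw => norm_cornerFactor_mul_arcWeight_le_of_mem_frontier hR hc hM hm harc hw)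
    (subset_closure ⟨mem_ball_zero_iff.2 hz, him⟩)
  simpa only [norm_mul, norm_arcWeight] using this

lemma norm_le_of_upperHalfDisc (hR : 0 < R) (hm : 0 < m) (hmM : m ≤ M)
    (hG : DiffContOnCl ℂ G (ball 0 R)) (hGM : ∀ z ∈ closedBall 0 R, ‖G z‖ ≤ M)
    (hGm : ∀ x : ℝ, |x| ≤ R → ‖G x‖ ≤ m) (hz : ‖z‖ ≤ R / 7) (him : 0 < z.im) :
    ‖G z‖ ≤ 49 / 24 * m * (M / m) ^ (1 / 4 : ℝ) := by
  have hM : 0 < M := hm.trans_le hmM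
  set c := 2 / π * Real.log (M / m) with hc_def
  have hc : 0 ≤ c := by
    have := Real.log_nonneg ((one_le_div hm).2 hmM)
    positivity
  have hcπ : c * π = 2 * Real.log (M / m) := by
    rw [hc_def]
    field_simp
  have harc : M * Real.exp (-(c * (π / 2))) ≤ m := by
    rw [show c * (π / 2) = Real.log (M / m) by linarith, Real.exp_neg,
      Real.exp_log (by positivity), inv_div]
    apply le_of_eq
    field_simp
  have hκ : 48 / 49 ≤ ‖cornerFactor R z‖ := by
    have : ‖z / R‖ ≤ 1 / 7 := by
      rw [norm_div, norm_real, Real.norm_of_nonneg hR.le, div_le_iff₀ hR]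
      linarith
    calc (48 / 49 : ℝ) ≤ ‖(1 : ℂ)‖ - ‖z / R‖ ^ 2 := by
          rw [norm_one]; nlinarith [norm_nonneg (z / R)]
      _ ≤ ‖cornerFactor R z‖ := by rw [← norm_pow]; exact norm_sub_norm_le _ _
  have hweight : ((M / m) ^ (1 / 4 : ℝ))⁻¹ ≤ Real.exp (-(c * arg (cayley R z))) := by
    rw [← Real.rpow_neg (by positivity), Real.rpow_def_of_pos (by positivity), Real.exp_le_exp]
    have := mul_le_mul_of_nonneg_left (arg_cayley_le_pi_div_eight hR hz) hc
    linarith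
  have := norm_cornerFactor_mul_le_of_upperHalfDisc hR hc hG hGM hGm harc (by linarith) him
  set P := (M / m) ^ (1 / 4 : ℝ)
  have hP : 0 < P := by positivity
  calc ‖G z‖ = 49 / 48 * (48 / 49 * (‖G z‖ * P⁻¹)) * P := by field_simp
    _ ≤ 49 / 48 * (‖cornerFactor R z‖ * (‖G z‖ * Real.exp (-(c * arg (cayley R z))))) * P := by
        gcongr
    _ ≤ 49 / 48 * (2 * m) * P := by gcongr
    _ = 49 / 24 * m * P := by ring

theorem norm_le_of_diffContOnCl_ball (hR : 0 < R) (hm : 0 < m) (hmM : m ≤ M)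
    (hG : DiffContOnCl ℂ G (ball 0 R)) (hGM : ∀ z ∈ closedBall 0 R, ‖G z‖ ≤ M)
    (hGm : ∀ x : ℝ, |x| ≤ R → ‖G x‖ ≤ m) (hz : ‖z‖ ≤ R / 7) :
    ‖G z‖ ≤ 49 / 24 * m * (M / m) ^ (1 / 4 : ℝ) := by
  rcases lt_trichotomy z.im 0 with hlower | hreal | hupper
  · simpa using norm_le_of_upperHalfDisc hR hm hmM hG.conj_conj_ball
      (fun w hw => by simpa using hGM (conj w) (by simpa using hw))
      (fun x hx => by simpa using hGm x hx) (z := conj z) (by simpa using hz)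
      (by simpa using hlower)
  · have hP : 1 ≤ (M / m) ^ (1 / 4 : ℝ) := Real.one_le_rpow ((one_le_div hm).2 hmM) (by norm_num)
    have hw : z = (z.re : ℂ) := Complex.ext rfl (by simp [hreal])
    calc ‖G z‖ ≤ m := hw ▸ hGm z.re (by linarith [abs_re_le_norm z])
      _ ≤ 49 / 24 * m * (M / m) ^ (1 / 4 : ℝ) := by nlinarith
  · exact norm_le_of_upperHalfDisc hR hm hmM hG hGM hGm hz hupper

end TwoConstants

lemma norm_exp_neg_sq_div_two_le (z : ℂ) :
    ‖Complex.exp (-z ^ 2 / 2)‖ ≤ Real.exp (‖z‖ ^ 2 / 2) := by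
  rw [norm_exp, Real.exp_le_exp, ← normSq_eq_norm_sq, normSq_apply]
  have : (-z ^ 2 / 2).re = (z.im ^ 2 - z.re ^ 2) / 2 := by simp [sq]
  rw [this]
  nlinarith [sq_nonneg z.re]

lemma norm_mul_exp_neg_sq_div_two_sub_one_le {z w : ℂ} {x : ℝ} (hx : 1 ≤ x)
    (hz : ‖z‖ ≤ √(Real.log x)) (hw : ‖w‖ ≤ 2 * √x) :
    ‖w * Complex.exp (-z ^ 2 / 2) - 1‖ ≤ 2 * x + 1 := by
  have hexp : ‖Complex.exp (-z ^ 2 / 2)‖ ≤ √x := by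
    have hz2 : ‖z‖ ^ 2 ≤ Real.log x :=
      Real.sq_sqrt (Real.log_nonneg hx) ▸ pow_le_pow_left₀ (norm_nonneg z) hz 2
    calc ‖Complex.exp (-z ^ 2 / 2)‖ ≤ Real.exp (Real.log x / 2) :=
          (norm_exp_neg_sq_div_two_le z).trans (Real.exp_le_exp.2 (by linarith))
      _ = √x := by
          rw [Real.sqrt_eq_rpow, Real.rpow_def_of_pos (by linarith)]
          ring_nf
  calc ‖w * Complex.exp (-z ^ 2 / 2) - 1‖ ≤ ‖w‖ * ‖Complex.exp (-z ^ 2 / 2)‖ + ‖(1 : ℂ)‖ := by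
        rw [← norm_mul]; exact norm_sub_le _ _
    _ ≤ 2 * √x * √x + 1 := by rw [norm_one]; gcongr
    _ = 2 * x + 1 := by rw [mul_assoc, Real.mul_self_sqrt (by linarith)]

lemma three_le_mul_rpow_three_halves {A x : ℝ} (hA : 0 < A) (hx : 1 + 3 / A ≤ x) :
    3 ≤ A * x ^ (3 / 2 : ℝ) := by
  have h3A : 0 < 3 / A := by positivity
  have hx1 : 1 ≤ x := by linarith
  have : x ≤ x ^ (3 / 2 : ℝ) := by
    simpa using Real.rpow_le_rpow_of_exponent_le hx1 (show (1 : ℝ) ≤ 3 / 2 by norm_num)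
  have hAx : A * (1 + 3 / A) = A + 3 := by field_simp
  nlinarith

lemma inv_mul_rpow_sq_one_fourth {x : ℝ} (hx : 0 < x) :
    x⁻¹ * (x ^ 2) ^ (1 / 4 : ℝ) = x ^ (-(1 : ℝ) / 2) := by
  rw [← Real.rpow_natCast, ← Real.rpow_mul hx.le, ← Real.rpow_neg_one, ← Real.rpow_add hx]
  norm_num

/-- Fix `A > 0`. There exist `n₀` and `A' > 0` (depending only
on `A`) such that for every `n ≥ n₀`: if `F` is analytic on the closed disc
`D = {t : |t| ≤ √(log n)}`, satisfies `|F(t)| ≤ 2√n` on `D`, and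
`|F(t)e^{−t²/2} − 1| ≤ A n⁻¹ (log n)^{3/2}` for all real `t ∈ [−√(log n), √(log n)]`,
then `|F(t)e^{−t²/2} − 1| ≤ A' n^{-1/2} (log n)^{3/2}` for all complex `t` with
`|t| ≤ (1/7)√(log n)`. -/
theorem statement4 (A : ℝ) (hA : 0 < A) :
    ∃ n₀ : ℕ, ∃ A' : ℝ, 0 < A' ∧ ∀ n : ℕ, n₀ ≤ n → ∀ F : ℂ → ℂ,
      (∀ t ∈ Metric.closedBall (0 : ℂ) (Real.sqrt (Real.log n)), AnalyticAt ℂ F t) →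
      (∀ t ∈ Metric.closedBall (0 : ℂ) (Real.sqrt (Real.log n)), ‖F t‖ ≤ 2 * Real.sqrt n) →
      (∀ t : ℝ, |t| ≤ Real.sqrt (Real.log n) →
        ‖F (t : ℂ) * Complex.exp (-(t : ℂ) ^ 2 / 2) - 1‖ ≤
          A * (n : ℝ)⁻¹ * Real.log n ^ ((3 : ℝ) / 2)) →
      ∀ t : ℂ, ‖t‖ ≤ 1 / 7 * Real.sqrt (Real.log n) →
        ‖F t * Complex.exp (-t ^ 2 / 2) - 1‖ ≤
          A' * (n : ℝ) ^ (-(1 : ℝ) / 2) * Real.log n ^ ((3 : ℝ) / 2) := by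
  refine ⟨⌈Real.exp (1 + 3 / A)⌉₊, 49 / 24 * A, by positivity, ?_⟩
  intro n hn F hFa hFb hFr t ht
  have hexp : Real.exp (1 + 3 / A) ≤ n := Nat.ceil_le.1 hn
  have hn0 : 0 < (n : ℝ) := (Real.exp_pos _).trans_le hexp
  have hlog : 1 + 3 / A ≤ Real.log n := (Real.le_log_iff_exp_le hn0).2 hexp
  have h3A : 0 < 3 / A := by positivity
  have hlog0 : 0 < Real.log n := by linarith
  have hn1 : 1 ≤ (n : ℝ) := (Real.one_le_exp (by positivity)).trans hexp
  -- Taking `M = m n²` makes `(M / m)^{1/4} = √n`; `log n ≥ 1 + 3 / A` gives `2n + 1 ≤ M`.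
  set m := A * (n : ℝ)⁻¹ * Real.log n ^ ((3 : ℝ) / 2)
  have hm : 0 < m := by positivity
  have hG : DiffContOnCl ℂ (fun z => F z * Complex.exp (-z ^ 2 / 2) - 1)
      (ball 0 √(Real.log n)) :=
    ((AnalyticOnNhd.differentiableOn hFa |>.mul (by fun_prop)).sub_const 1).diffContOnCl_ball
      subset_rfl
  have hGM : ∀ z ∈ closedBall (0 : ℂ) √(Real.log n),
      ‖F z * Complex.exp (-z ^ 2 / 2) - 1‖ ≤ m * (n : ℝ) ^ 2 := fun z hz => by
    have h3 := three_le_mul_rpow_three_halves hA hlog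
    calc ‖F z * Complex.exp (-z ^ 2 / 2) - 1‖ ≤ 2 * n + 1 :=
          norm_mul_exp_neg_sq_div_two_sub_one_le hn1 (mem_closedBall_zero_iff.1 hz) (hFb z hz)
      _ ≤ A * Real.log n ^ ((3 : ℝ) / 2) * n := by nlinarith
      _ = m * (n : ℝ) ^ 2 := by simp only [m]; field_simp
  calc ‖F t * Complex.exp (-t ^ 2 / 2) - 1‖
      ≤ 49 / 24 * m * (m * (n : ℝ) ^ 2 / m) ^ (1 / 4 : ℝ) :=
        TwoConstants.norm_le_of_diffContOnCl_ball (G := fun z => F z * Complex.exp (-z ^ 2 / 2) - 1)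
          (Real.sqrt_pos.2 hlog0) hm
          (le_mul_of_one_le_right hm.le (one_le_pow₀ hn1)) hG hGM hFr (by linarith)
    _ = 49 / 24 * A * (n : ℝ) ^ (-(1 : ℝ) / 2) * Real.log n ^ ((3 : ℝ) / 2) := by
        rw [mul_div_cancel_left₀ _ hm.ne', ← inv_mul_rpow_sq_one_fourth hn0]
        ring
end

section
/- Let [a₁,b₁] and [a₂,b₂] be two disjoint closed bounded intervals. Then there exist constants C > 0 and d > 0 such that for every integer k ≥ 1 and every λ ∈ [a₂,b₂]: | ∫_{a₁}^{b₁} log|λ−μ| · p_k(μ) / w(μ) dμ | ≤ C e^{−dk}, where p_k and w are the k-th Chebyshev function and the Chebyshev weight on [a₁,b₁]. -/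
/-!
The substitution `μ = r cos θ + c` (`r`, `c` the radius and midpoint of `[a₁, b₁]`) turns the
integral into the `k`-th cosine coefficient of `θ ↦ log |λ - r cos θ - c|` on `[0, π]`.
Inverting the Joukowski map, `(λ - c) / r = (t + t⁻¹) / 2` with `|t| ≤ r / |λ - c| < 1`, and then
`log |λ - r cos θ - c| = log (r / 2|t|) + log (1 - 2 t cos θ + t²)
  = log (r / 2|t|) - 2 ∑ₙ tⁿ cos (nθ) / n`.
By orthogonality the `k`-th coefficient only sees the tail `n ≥ k` of this series, which is
`O(|t|ᵏ)` uniformly in `θ`; since `λ` stays a fixed distance away from `[a₁, b₁]`, `|t|` is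
bounded away from `1`.
-/

open Real

noncomputable section

/-- The `k`-th Chebyshev function on `[a,b]`:
`p_k(μ) = cos(k · arccos((2μ − a − b)/(b − a)))`. -/
def cheb (a b : ℝ) (k : ℕ) (mu : ℝ) : ℝ :=
  Real.cos (k * Real.arccos ((2 * mu - a - b) / (b - a)))

/-- The Chebyshev weight on `[a,b]`: `w(μ) = √((μ−a)(b−μ))`. -/
def chebW (a b mu : ℝ) : ℝ := Real.sqrt ((mu - a) * (b - mu))

open Set MeasureTheory

lemma integral_cos_int_mul {j : ℤ} (hj : j ≠ 0) : ∫ θ in (0 : ℝ)..π, cos (j * θ) = 0 := by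
  rw [intervalIntegral.integral_comp_mul_left cos (Int.cast_ne_zero.mpr hj)]
  simp [sin_int_mul_pi]

lemma integral_cos_nat_mul_mul_cos_nat_mul {m n : ℕ} (h : m ≠ n) :
    ∫ θ in (0 : ℝ)..π, cos (m * θ) * cos (n * θ) = 0 := by
  have hsum : ∀ θ : ℝ, cos (m * θ) * cos (n * θ)
      = (cos (((m - n : ℤ) : ℝ) * θ) + cos (((m + n : ℤ) : ℝ) * θ)) / 2 := fun θ => by
    push_cast
    rw [sub_mul, add_mul, cos_add, cos_sub]
    ring
  simp_rw [hsum]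
  rw [intervalIntegral.integral_div, intervalIntegral.integral_add
    ((by fun_prop : Continuous _).intervalIntegrable _ _)
    ((by fun_prop : Continuous _).intervalIntegrable _ _),
    integral_cos_int_mul (by omega), integral_cos_int_mul (by omega)]
  norm_num

lemma integral_sum_mul_cos_nat_mul_mul_cos_nat_mul (c : ℕ → ℝ) (k : ℕ) :
    ∫ θ in (0 : ℝ)..π, (∑ n ∈ Finset.range k, c n * cos (n * θ)) * cos (k * θ) = 0 := by
  simp_rw [Finset.sum_mul, mul_assoc]
  rw [intervalIntegral.integral_finsetSum fun n _ =>
    (by fun_prop : Continuous _).intervalIntegrable _ _]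
  refine Finset.sum_eq_zero fun n hn => ?_
  rw [intervalIntegral.integral_const_mul,
    integral_cos_nat_mul_mul_cos_nat_mul (Finset.mem_range.mp hn).ne, mul_zero]

lemma abs_integral_mul_cos_nat_mul_le {F : ℝ → ℝ} (hF : IntervalIntegrable F volume 0 π)
    (c : ℕ → ℝ) (k : ℕ) {ε : ℝ}
    (hε : ∀ θ, |F θ - ∑ n ∈ Finset.range k, c n * cos (n * θ)| ≤ ε) :
    |∫ θ in (0 : ℝ)..π, F θ * cos (k * θ)| ≤ π * ε := by
  have hcos : Continuous fun θ : ℝ => cos (k * θ) := by fun_prop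
  have hsplit : ∫ θ in (0 : ℝ)..π, (F θ - ∑ n ∈ Finset.range k, c n * cos (n * θ)) * cos (k * θ)
      = ∫ θ in (0 : ℝ)..π, F θ * cos (k * θ) := by
    simp_rw [sub_mul]
    rw [intervalIntegral.integral_sub (hF.mul_continuousOn hcos.continuousOn)
      ((by fun_prop : Continuous _).intervalIntegrable _ _),
      integral_sum_mul_cos_nat_mul_mul_cos_nat_mul, sub_zero]
  have hbound : ∀ θ ∈ uIoc 0 π,
      ‖(F θ - ∑ n ∈ Finset.range k, c n * cos (n * θ)) * cos (k * θ)‖ ≤ ε := fun θ _ => by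
    rw [norm_mul, Real.norm_eq_abs, Real.norm_eq_abs]
    exact (mul_le_of_le_one_right (abs_nonneg _) (abs_cos_le_one _)).trans (hε θ)
  have := intervalIntegral.norm_integral_le_of_norm_le_const hbound
  rwa [hsplit, Real.norm_eq_abs, sub_zero, abs_of_nonneg pi_pos.le, mul_comm] at this

lemma one_sub_two_mul_cos_add_sq_pos {t : ℝ} (ht : |t| < 1) (θ : ℝ) :
    0 < 1 - 2 * t * cos θ + t ^ 2 := by
  have : t * cos θ ≤ |t| := by
    calc t * cos θ ≤ |t * cos θ| := le_abs_self _
      _ ≤ |t| := by rw [abs_mul]; exact mul_le_of_le_one_right (abs_nonneg t) (abs_cos_le_one θ)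
  nlinarith [sq_abs t]

lemma hasSum_log_one_sub_two_mul_cos_add_sq {t : ℝ} (ht : |t| < 1) (θ : ℝ) :
    HasSum (fun n : ℕ => -2 * t ^ n / n * cos (n * θ)) (log (1 - 2 * t * cos θ + t ^ 2)) := by
  set z : ℂ := t * Complex.exp (θ * Complex.I)
  have hz : ‖z‖ < 1 := by simpa [z, Complex.norm_exp_ofReal_mul_I] using ht
  have hre : ∀ n : ℕ, (z ^ n / n).re = t ^ n / n * cos (n * θ) := fun n => by
    rw [mul_pow, ← Complex.exp_nat_mul, ← mul_assoc]
    norm_cast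
    rw [Complex.div_natCast_re, Complex.re_ofReal_mul, Complex.exp_ofReal_mul_I_re]
    ring
  have hnorm : ‖1 - z‖ ^ 2 = 1 - 2 * t * cos θ + t ^ 2 := by
    rw [Complex.sq_norm, Complex.normSq_apply]
    simp only [z, Complex.sub_re, Complex.sub_im, Complex.one_re, Complex.one_im,
      Complex.re_ofReal_mul, Complex.im_ofReal_mul, Complex.exp_ofReal_mul_I_re,
      Complex.exp_ofReal_mul_I_im]
    nlinarith [sin_sq_add_cos_sq θ]
  have hlog : log (1 - 2 * t * cos θ + t ^ 2) = -2 * (-Complex.log (1 - z)).re := by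
    rw [← hnorm, Real.log_pow, Complex.neg_re, Complex.log_re]
    push_cast
    ring
  rw [hlog]
  refine ((Complex.hasSum_re (Complex.hasSum_taylorSeries_neg_log hz)).mul_left (-2)).congr_fun
    fun n => ?_
  rw [hre]
  ring

lemma abs_log_one_sub_two_mul_cos_add_sq_sub_sum_le {t : ℝ} (ht : |t| < 1) (θ : ℝ) (k : ℕ) :
    |log (1 - 2 * t * cos θ + t ^ 2) - ∑ n ∈ Finset.range k, -2 * t ^ n / n * cos (n * θ)|
      ≤ 2 * |t| ^ k / (1 - |t|) := by
  have hterm : ∀ n : ℕ, |-2 * t ^ n / n * cos (n * θ)| ≤ 2 * |t| ^ n := fun n => by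
    rw [abs_mul, abs_div, abs_mul, abs_pow, abs_neg, abs_two, Nat.abs_cast]
    rcases n.eq_zero_or_pos with rfl | hn
    · simp
    calc 2 * |t| ^ n / n * |cos (n * θ)| ≤ 2 * |t| ^ n / n :=
          mul_le_of_le_one_right (by positivity) (abs_cos_le_one _)
      _ ≤ 2 * |t| ^ n := div_le_self (by positivity) (by exact_mod_cast hn)
  have := dist_le_of_le_geometric_of_tendsto |t| 2 ht (fun n => by
      rw [dist_comm, Real.dist_eq, Finset.sum_range_succ, add_sub_cancel_left]
      exact hterm n)
    (hasSum_log_one_sub_two_mul_cos_add_sq ht θ).tendsto_sum_nat k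
  rwa [dist_comm, Real.dist_eq] at this

lemma abs_integral_log_one_sub_two_mul_cos_add_sq_mul_cos_le {t : ℝ} (ht : |t| < 1) (k : ℕ) :
    |∫ θ in (0 : ℝ)..π, log (1 - 2 * t * cos θ + t ^ 2) * cos (k * θ)|
      ≤ π * (2 * |t| ^ k / (1 - |t|)) := by
  have hcont : Continuous fun θ => log (1 - 2 * t * cos θ + t ^ 2) :=
    (by fun_prop : Continuous _).log fun θ => (one_sub_two_mul_cos_add_sq_pos ht θ).ne'
  exact abs_integral_mul_cos_nat_mul_le (hcont.intervalIntegrable _ _) _ k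
    (abs_log_one_sub_two_mul_cos_add_sq_sub_sum_le ht · k)

lemma cheb_affine_cos {a b : ℝ} (hab : a < b) (k : ℕ) {θ : ℝ} (hθ : θ ∈ Icc 0 π) :
    cheb a b k ((b - a) / 2 * cos θ + (a + b) / 2) = cos (k * θ) := by
  have harg : (2 * ((b - a) / 2 * cos θ + (a + b) / 2) - a - b) / (b - a) = cos θ := by
    field_simp [(sub_pos.mpr hab).ne']
    ring
  rw [cheb, harg, arccos_cos hθ.1 hθ.2]

lemma chebW_affine_cos {a b : ℝ} (hab : a < b) {θ : ℝ} (hθ : θ ∈ Icc 0 π) :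
    chebW a b ((b - a) / 2 * cos θ + (a + b) / 2) = (b - a) / 2 * sin θ := by
  have hsq : ((b - a) / 2 * cos θ + (a + b) / 2 - a) * (b - ((b - a) / 2 * cos θ + (a + b) / 2))
      = ((b - a) / 2 * sin θ) ^ 2 := by
    linear_combination (-((b - a) / 2) ^ 2) * sin_sq_add_cos_sq θ
  rw [chebW, hsq, sqrt_sq (mul_nonneg (by linarith) (sin_nonneg_of_nonneg_of_le_pi hθ.1 hθ.2))]

lemma image_affine_cos_Ioo {a b : ℝ} (hab : a < b) :
    (fun θ => (b - a) / 2 * cos θ + (a + b) / 2) '' Ioo 0 π = Ioo a b := by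
  have hcos : cos '' Ioo 0 π = Ioo (-1) 1 := cosPartialHomeomorph.image_source_eq_target
  rw [← image_image (fun x => (b - a) / 2 * x + (a + b) / 2) cos, hcos,
    image_affine_Ioo (by linarith)]
  congr 1 <;> ring

theorem integral_mul_cheb_div_chebW (g : ℝ → ℝ) {a b : ℝ} (hab : a < b) (k : ℕ) :
    ∫ μ in a..b, g μ * cheb a b k μ / chebW a b μ
      = ∫ θ in (0 : ℝ)..π, g ((b - a) / 2 * cos θ + (a + b) / 2) * cos (k * θ) := by
  set f : ℝ → ℝ := fun θ => (b - a) / 2 * cos θ + (a + b) / 2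
  have hr : 0 < (b - a) / 2 := by linarith
  have hderiv : ∀ θ ∈ Ioo (0 : ℝ) π,
      HasDerivWithinAt f (-((b - a) / 2 * sin θ)) (Ioo 0 π) θ := fun θ _ =>
    ((((hasDerivAt_cos θ).const_mul ((b - a) / 2)).add_const ((a + b) / 2)).congr_deriv
      (mul_neg _ _)).hasDerivWithinAt
  have hinj : InjOn f (Ioo 0 π) := fun x hx y hy hxy =>
    injOn_cos (Ioo_subset_Icc_self hx) (Ioo_subset_Icc_self hy)
      (mul_left_cancel₀ hr.ne' (add_right_cancel hxy))
  have hpoint : EqOn (fun θ => |-((b - a) / 2 * sin θ)| • (g (f θ) * cheb a b k (f θ) /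
      chebW a b (f θ))) (fun θ => g (f θ) * cos (k * θ)) (Ioo 0 π) := fun θ hθ => by
    have hsin : 0 < (b - a) / 2 * sin θ := mul_pos hr (sin_pos_of_pos_of_lt_pi hθ.1 hθ.2)
    simp only [f, cheb_affine_cos hab k (Ioo_subset_Icc_self hθ),
      chebW_affine_cos hab (Ioo_subset_Icc_self hθ), abs_neg, abs_of_pos hsin, smul_eq_mul]
    exact mul_div_cancel₀ _ hsin.ne'
  rw [intervalIntegral.integral_of_le hab.le, integral_Ioc_eq_integral_Ioo,
    ← image_affine_cos_Ioo hab, integral_image_eq_integral_abs_deriv_smul measurableSet_Ioo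
      hderiv hinj, setIntegral_congr_fun measurableSet_Ioo hpoint,
    intervalIntegral.integral_of_le pi_pos.le, integral_Ioc_eq_integral_Ioo]

lemma exists_sq_add_one_eq_two_mul_mul {s : ℝ} (hs : 1 ≤ |s|) :
    ∃ t : ℝ, t ≠ 0 ∧ |t| ≤ |s|⁻¹ ∧ t ^ 2 + 1 = 2 * t * s := by
  have of_one_le : ∀ u : ℝ, 1 ≤ u → ∃ t : ℝ, 0 < t ∧ t ≤ u⁻¹ ∧ t ^ 2 + 1 = 2 * t * u :=
      fun u hu => by
    have hsq := sq_sqrt (by nlinarith : (0 : ℝ) ≤ u ^ 2 - 1)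
    have hprod : (u - √(u ^ 2 - 1)) * (u + √(u ^ 2 - 1)) = 1 := by nlinarith
    have hpos : 0 < u + √(u ^ 2 - 1) := by positivity
    have ht : u - √(u ^ 2 - 1) = (u + √(u ^ 2 - 1))⁻¹ := eq_inv_of_mul_eq_one_left hprod
    refine ⟨u - √(u ^ 2 - 1), ht ▸ inv_pos.mpr hpos, ht ▸ inv_anti₀ (by linarith)
      (le_add_of_nonneg_right (sqrt_nonneg _)), by nlinarith⟩
  rcases le_or_gt 0 s with hs0 | hs0
  · rw [abs_of_nonneg hs0] at hs ⊢
    obtain ⟨t, ht0, hts, ht⟩ := of_one_le s hs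
    exact ⟨t, ht0.ne', (abs_of_pos ht0).symm ▸ hts, ht⟩
  · rw [abs_of_neg hs0] at hs ⊢
    obtain ⟨t, ht0, hts, ht⟩ := of_one_le (-s) hs
    exact ⟨-t, neg_ne_zero.mpr ht0.ne', by rwa [abs_neg, abs_of_pos ht0], by linear_combination ht⟩

lemma log_abs_mul_sub_cos {r s t : ℝ} (hr : 0 < r) (ht0 : t ≠ 0) (ht : |t| < 1)
    (hts : t ^ 2 + 1 = 2 * t * s) (θ : ℝ) :
    log |r * (s - cos θ)| = log (r / (2 * |t|)) + log (1 - 2 * t * cos θ + t ^ 2) := by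
  have hQ := one_sub_two_mul_cos_add_sq_pos ht θ
  have hfac : r * (s - cos θ) = r / (2 * t) * (1 - 2 * t * cos θ + t ^ 2) := by
    field_simp
    linear_combination -hts
  rw [hfac, abs_mul, abs_of_pos hQ, abs_div, abs_mul, abs_two, abs_of_pos hr,
    log_mul (by positivity) hQ.ne']

theorem abs_integral_log_abs_sub_mul_cheb_div_chebW_le {a b ρ lam : ℝ} (hab : a < b)
    (hρ : (b - a) / 2 < ρ) (hlam : ρ ≤ |lam - (a + b) / 2|) {k : ℕ} (hk : k ≠ 0) :
    |∫ μ in a..b, log |lam - μ| * cheb a b k μ / chebW a b μ|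
      ≤ 2 * π / (1 - (b - a) / (2 * ρ)) * ((b - a) / (2 * ρ)) ^ k := by
  set r := (b - a) / 2 with hr_def
  have hr : 0 < r := by linarith
  have hs : 1 ≤ |(lam - (a + b) / 2) / r| := by
    rw [abs_div, abs_of_pos hr, one_le_div hr]
    linarith
  obtain ⟨t, ht0, hts, ht⟩ := exists_sq_add_one_eq_two_mul_mul hs
  have htq : |t| ≤ (b - a) / (2 * ρ) := by
    refine hts.trans ?_
    rw [abs_div, abs_of_pos hr, inv_div, div_le_div_iff₀ (by linarith) (by linarith), hr_def]
    nlinarith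
  have hq : (b - a) / (2 * ρ) < 1 := by rw [div_lt_one (by linarith)]; linarith
  have ht1 : |t| < 1 := htq.trans_lt hq
  have hlog : ∀ θ, log |lam - ((b - a) / 2 * cos θ + (a + b) / 2)|
      = log (r / (2 * |t|)) + log (1 - 2 * t * cos θ + t ^ 2) := fun θ => by
    rw [← log_abs_mul_sub_cos hr ht0 ht1 ht θ]
    congr 2
    field_simp
    ring
  have hcont : Continuous fun θ => log (1 - 2 * t * cos θ + t ^ 2) * cos (k * θ) :=
    ((by fun_prop : Continuous _).log fun θ => (one_sub_two_mul_cos_add_sq_pos ht1 θ).ne').mul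
      (by fun_prop)
  have hconst : ∫ θ in (0 : ℝ)..π, log (r / (2 * |t|)) * cos (k * θ) = 0 := by
    rw [intervalIntegral.integral_const_mul, ← Int.cast_natCast k,
      integral_cos_int_mul (Int.natCast_ne_zero.mpr hk), mul_zero]
  rw [integral_mul_cheb_div_chebW _ hab]
  simp_rw [hlog, add_mul]
  rw [intervalIntegral.integral_add ((by fun_prop : Continuous _).intervalIntegrable _ _)
    (hcont.intervalIntegrable _ _), hconst, zero_add]
  calc _ ≤ π * (2 * |t| ^ k / (1 - |t|)) :=
        abs_integral_log_one_sub_two_mul_cos_add_sq_mul_cos_le ht1 k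
    _ ≤ π * (2 * ((b - a) / (2 * ρ)) ^ k / (1 - (b - a) / (2 * ρ))) := by
        have hq0 : 0 ≤ (b - a) / (2 * ρ) := (abs_nonneg t).trans htq
        gcongr
    _ = _ := by ring

lemma exists_lt_forall_le_abs_sub_midpoint {a₁ b₁ a₂ b₂ : ℝ} (h₁ : a₁ ≤ b₁) (h₂ : a₂ ≤ b₂)
    (hdisj : Disjoint (Icc a₁ b₁) (Icc a₂ b₂)) :
    ∃ ρ, (b₁ - a₁) / 2 < ρ ∧ ∀ lam ∈ Icc a₂ b₂, ρ ≤ |lam - (a₁ + b₁) / 2| := by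
  have hgap : b₁ < a₂ ∨ b₂ < a₁ := by
    by_contra! h
    exact disjoint_left.mp hdisj ⟨le_max_left _ _, max_le h₁ h.1⟩ ⟨le_max_right _ _, max_le h.2 h₂⟩
  rcases hgap with hgap | hgap
  · refine ⟨a₂ - (a₁ + b₁) / 2, by linarith, fun lam hlam => ?_⟩
    exact le_abs.mpr (.inl (by linarith [hlam.1]))
  · refine ⟨(a₁ + b₁) / 2 - b₂, by linarith, fun lam hlam => ?_⟩
    exact le_abs.mpr (.inr (by linarith [hlam.2]))

/-- For two disjoint closed bounded intervals `[a₁,b₁]`,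
`[a₂,b₂]`, there are `C > 0` and `d > 0` such that for every `k ≥ 1` and every
`λ ∈ [a₂,b₂]`: `|∫_{a₁}^{b₁} log|λ−μ| p_k(μ)/w(μ) dμ| ≤ C e^{−dk}`, where `p_k`
and `w` are taken on `[a₁,b₁]`. -/
theorem statement6 (a₁ b₁ a₂ b₂ : ℝ) (h₁ : a₁ < b₁) (h₂ : a₂ < b₂)
    (hdisj : Disjoint (Set.Icc a₁ b₁) (Set.Icc a₂ b₂)) :
    ∃ C > (0 : ℝ), ∃ d > (0 : ℝ), ∀ k : ℕ, 1 ≤ k → ∀ lam ∈ Set.Icc a₂ b₂,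
      |∫ μ in a₁..b₁, Real.log |lam - μ| * cheb a₁ b₁ k μ / chebW a₁ b₁ μ| ≤
        C * Real.exp (-d * (k : ℝ)) := by
  obtain ⟨ρ, hρ, hsep⟩ := exists_lt_forall_le_abs_sub_midpoint h₁.le h₂.le hdisj
  have hq0 : 0 < (b₁ - a₁) / (2 * ρ) := div_pos (by linarith) (by linarith)
  have hq1 : (b₁ - a₁) / (2 * ρ) < 1 := (div_lt_one (by linarith)).mpr (by linarith)
  refine ⟨2 * π / (1 - (b₁ - a₁) / (2 * ρ)), div_pos (by positivity) (by linarith),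
    -log ((b₁ - a₁) / (2 * ρ)), neg_pos.mpr (log_neg hq0 hq1), fun k hk lam hlam => ?_⟩
  rw [neg_neg, mul_comm (log _), exp_nat_mul, exp_log hq0]
  exact abs_integral_log_abs_sub_mul_cheb_div_chebW_le h₁ hρ (hsep lam hlam) (by omega)
end
end

section
/- For every integer k ≥ 1 and every real z > 1: ∫_0^π ( sin x · sin(kx) ) / ( z − cos x ) dx = π ( z − √(z² − 1) )^k. -/
/-!
Writing `sin x sin ((n+1)x) = (cos (nx) - cos ((n+2)x)) / 2` reduces the claim to the classical
moments `Cₙ = ∫₀^π cos (nx) / (z - cos x) dx = π rⁿ / √(z² - 1)` with `r = z - √(z² - 1)`, since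
`rⁿ - rⁿ⁺² = 2 √(z² - 1) rⁿ⁺¹`. From `cos ((n+2)x) + cos (nx) = 2 cos x cos ((n+1)x)` and
`∫₀^π cos ((n+1)x) dx = 0` one gets `Cₙ₊₂ = 2z Cₙ₊₁ - Cₙ`, the recurrence solved by `rⁿ`
because `r² = 2zr - 1`. Finally `C₁ = z C₀ - π`, and `C₀ = π / √(z² - 1)` because
`arccos ((z cos x - 1) / (z - cos x)) / √(z² - 1)` is an antiderivative of `1 / (z - cos x)`
on `(0, π)`.
-/

open Real intervalIntegral MeasureTheory

section
variable {z : ℝ}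

lemma sub_cos_pos (hz : 1 < z) (x : ℝ) : 0 < z - cos x := by
  linarith [cos_le_one x]

lemma integral_cos_nat_mul_zero_pi {n : ℕ} (hn : n ≠ 0) :
    ∫ x in (0 : ℝ)..π, cos (n * x) = 0 := by
  simp [integral_comp_mul_left (fun x => cos x) (Nat.cast_ne_zero.mpr hn), sin_nat_mul_pi]

lemma hasDerivAt_arccos_div_sub_cos (hz : 1 < z) {x : ℝ} (hx : 0 < sin x) :
    HasDerivAt (fun x => arccos ((z * cos x - 1) / (z - cos x)))
      (√(z ^ 2 - 1) / (z - cos x)) x := by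
  set s := √(z ^ 2 - 1)
  have hs : s ^ 2 = z ^ 2 - 1 := sq_sqrt (by nlinarith)
  have hs_pos : 0 < s := sqrt_pos.mpr (by nlinarith)
  have hd := sub_cos_pos hz x
  have hu : HasDerivAt (fun x => (z * cos x - 1) / (z - cos x))
      (-sin x * s ^ 2 / (z - cos x) ^ 2) x := by
    refine (((hasDerivAt_cos x).const_mul z).sub_const 1 |>.div
      ((hasDerivAt_cos x).const_sub z) hd.ne').congr_deriv ?_
    rw [hs]; field_simp; ring
  set u := (z * cos x - 1) / (z - cos x) with hu_def
  have hsqrt : √(1 - u ^ 2) = s * sin x / (z - cos x) := by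
    rw [← sqrt_sq (by positivity : 0 ≤ s * sin x / (z - cos x)), hu_def]
    congr 1
    field_simp
    linear_combination (-sin x ^ 2) * hs - (z ^ 2 - 1) * sin_sq_add_cos_sq x
  have hu_sq : 0 < 1 - u ^ 2 := sqrt_pos.mp (hsqrt ▸ by positivity)
  have hu_ne_one : u ≠ 1 := by rintro h; simp [h] at hu_sq
  have hu_ne_neg_one : u ≠ -1 := by rintro h; simp [h] at hu_sq
  refine ((hasDerivAt_arccos hu_ne_neg_one hu_ne_one).comp x hu).congr_deriv ?_
  rw [hsqrt]
  field_simp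

lemma continuous_div_sub_cos {f : ℝ → ℝ} (hf : Continuous f) (hz : 1 < z) :
    Continuous fun x => f x / (z - cos x) :=
  hf.div (by fun_prop) fun x => (sub_cos_pos hz x).ne'

lemma intervalIntegrable_div_sub_cos {f : ℝ → ℝ} (hf : Continuous f) (hz : 1 < z) (a b : ℝ) :
    IntervalIntegrable (fun x => f x / (z - cos x)) volume a b :=
  (continuous_div_sub_cos hf hz).intervalIntegrable a b

lemma integral_one_div_sub_cos (hz : 1 < z) :
    ∫ x in (0 : ℝ)..π, 1 / (z - cos x) = π / √(z ^ 2 - 1) := by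
  have hs_pos : 0 < √(z ^ 2 - 1) := sqrt_pos.mpr (by nlinarith)
  have hFTC : ∫ x in (0 : ℝ)..π, √(z ^ 2 - 1) / (z - cos x) = π := by
    rw [integral_eq_sub_of_hasDerivAt_of_le pi_pos.le
      (continuous_arccos.comp (continuous_div_sub_cos (by fun_prop) hz)).continuousOn
      (fun x hx => hasDerivAt_arccos_div_sub_cos hz (sin_pos_of_pos_of_lt_pi hx.1 hx.2))
      (intervalIntegrable_div_sub_cos continuous_const hz 0 π)]
    have h_neg : (z * -1 - 1) / (z - -1) = -1 := by field_simp [show z + 1 ≠ 0 by linarith]; ring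
    have h_one : (z * 1 - 1) / (z - 1) = 1 := by field_simp [show z - 1 ≠ 0 by linarith]
    simp only [Function.comp_apply, cos_pi, cos_zero, h_neg, h_one, arccos_neg_one, arccos_one,
      sub_zero]
  calc ∫ x in (0 : ℝ)..π, 1 / (z - cos x)
      = ∫ x in (0 : ℝ)..π, √(z ^ 2 - 1) / (z - cos x) / √(z ^ 2 - 1) :=
        integral_congr fun x _ => by field_simp
    _ = π / √(z ^ 2 - 1) := by rw [intervalIntegral.integral_div, hFTC]

lemma integral_cos_nat_add_two_mul_div_sub_cos (hz : 1 < z) (n : ℕ) :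
    ∫ x in (0 : ℝ)..π, cos ((n + 2 : ℕ) * x) / (z - cos x) =
      2 * z * (∫ x in (0 : ℝ)..π, cos ((n + 1 : ℕ) * x) / (z - cos x)) -
        ∫ x in (0 : ℝ)..π, cos (n * x) / (z - cos x) := by
  have hcos : ∀ x, cos ((n + 2 : ℕ) * x) / (z - cos x) =
      2 * z * (cos ((n + 1 : ℕ) * x) / (z - cos x)) - cos (n * x) / (z - cos x) -
        2 * cos ((n + 1 : ℕ) * x) := fun x => by
    have hd := (sub_cos_pos hz x).ne'
    have h := cos_add_cos ((n + 2 : ℕ) * x) (n * x)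
    push_cast at h ⊢
    rw [show ((n + 2) * x + n * x) / 2 = (n + 1) * x by ring,
      show ((n + 2) * x - n * x) / 2 = x by ring] at h
    rw [div_eq_iff hd, sub_mul, sub_mul, mul_assoc, div_mul_cancel₀ _ hd, div_mul_cancel₀ _ hd]
    linear_combination h
  simp_rw [hcos]
  have hint : ∀ m : ℕ, IntervalIntegrable (fun x => cos (m * x) / (z - cos x)) volume 0 π :=
    fun m => intervalIntegrable_div_sub_cos (by fun_prop) hz 0 π
  rw [integral_sub (((hint _).const_mul _).sub (hint _))
      ((by fun_prop : Continuous fun x : ℝ => 2 * cos ((n + 1 : ℕ) * x)).intervalIntegrable 0 π),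
    integral_sub ((hint _).const_mul _) (hint _), intervalIntegral.integral_const_mul,
    intervalIntegral.integral_const_mul, integral_cos_nat_mul_zero_pi n.succ_ne_zero]
  ring

theorem integral_cos_nat_mul_div_sub_cos (hz : 1 < z) (n : ℕ) :
    ∫ x in (0 : ℝ)..π, cos (n * x) / (z - cos x) =
      π * (z - √(z ^ 2 - 1)) ^ n / √(z ^ 2 - 1) := by
  have hs : √(z ^ 2 - 1) ^ 2 = z ^ 2 - 1 := sq_sqrt (by nlinarith)
  have hs_pos : 0 < √(z ^ 2 - 1) := sqrt_pos.mpr (by nlinarith)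
  induction n using Nat.twoStepInduction with
  | zero => simpa using integral_one_div_sub_cos hz
  | one =>
    have h : ∀ x, cos x / (z - cos x) = z * (1 / (z - cos x)) - 1 := fun x => by
      field_simp [(sub_cos_pos hz x).ne']
      ring
    simp_rw [Nat.cast_one, one_mul, h]
    rw [integral_sub ((intervalIntegrable_div_sub_cos continuous_const hz 0 π).const_mul z)
      intervalIntegrable_const, intervalIntegral.integral_const_mul, integral_one_div_sub_cos hz,
      integral_one, sub_zero]
    field_simp
  | more n ih₀ ih₁ =>
    rw [integral_cos_nat_add_two_mul_div_sub_cos hz, ih₀, ih₁]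
    field_simp
    linear_combination (-(z - √(z ^ 2 - 1)) ^ n) * hs

end

/-- For every integer `k ≥ 1` and every real `z > 1`:
`∫_0^π (sin x · sin(kx))/(z − cos x) dx = π (z − √(z² − 1))^k`. -/
theorem statement7 (k : ℕ) (hk : 1 ≤ k) (z : ℝ) (hz : 1 < z) :
    ∫ x in (0 : ℝ)..π, Real.sin x * Real.sin (k * x) / (z - Real.cos x) =
      π * (z - Real.sqrt (z ^ 2 - 1)) ^ k := by
  obtain ⟨n, rfl⟩ := Nat.exists_eq_add_of_le' hk
  have hprod : ∀ x, sin x * sin ((n + 1 : ℕ) * x) / (z - cos x) =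
      (cos (n * x) / (z - cos x) - cos ((n + 2 : ℕ) * x) / (z - cos x)) / 2 := fun x => by
    rw [← sub_div, cos_sub_cos]
    push_cast
    rw [show (n * x + (n + 2) * x) / 2 = (n + 1) * x by ring,
      show (n * x - (n + 2) * x) / 2 = -x by ring, sin_neg]
    ring
  have hs : √(z ^ 2 - 1) ^ 2 = z ^ 2 - 1 := sq_sqrt (by nlinarith)
  have hs_pos : 0 < √(z ^ 2 - 1) := sqrt_pos.mpr (by nlinarith)
  simp_rw [hprod]
  rw [intervalIntegral.integral_div,
    integral_sub (intervalIntegrable_div_sub_cos (by fun_prop) hz 0 π)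
      (intervalIntegrable_div_sub_cos (by fun_prop) hz 0 π),
    integral_cos_nat_mul_div_sub_cos hz, integral_cos_nat_mul_div_sub_cos hz]
  field_simp
  linear_combination (z - √(z ^ 2 - 1)) ^ n * hs
end

section
/- Fix d > 0 and let a_d be the associated kernel profile. Then for every continuous compactly supported f : ℝ → ℝ, one has ∫_ℝ ∫_ℝ [ log(1/|λ−μ|) − a_d(|λ−μ|) ] f(λ) f(μ) dλ dμ ≥ 0; that is, the kernel log|λ−μ|^{−1} − a_d(|λ−μ|), which vanishes for |λ−μ| ≥ d, is positive semidefinite. -/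
/-!
Write `K u = log (1/|u|) - a_d(|u|)`. On `(0, ∞)` the function `K` is convex and vanishes on
`[d, ∞)`, so `K u = ∫ max (s - |u|) 0 dν(s)` where `ν` is its second derivative taken as a
measure: the density `K'' s = (1 - 6t² + 16t³ - 9t⁴) / s²` (with `t = s/d`) on `(0, d)`,
nonnegative because the quartic is nonnegative on `[0, 1]`, and an atom `-K'(d⁻) = 2/d` at `d`.

Each tent `max (s - |x - y|) 0` is a positive semidefinite kernel, being the autocorrelation
`∫ 1_{[z, z+s]}(x) 1_{[z, z+s]}(y) dz` of an indicator; hence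
`∫∫ K(x - y) f(x) f(y) = ∫ (∫ (∫_z^{z+s} f)² dz) dν(s) ≥ 0`. Fubini is justified because the tent
of width `s` contributes `O(s²)` for compactly supported bounded `f`, and `∫ s² dν < ∞`.
-/

open MeasureTheory Real

noncomputable section

/-- `a₀(t) = (3/4)t⁴ − (8/3)t³ + 3t²`. -/
def a0 (t : ℝ) : ℝ := 3 / 4 * t ^ 4 - 8 / 3 * t ^ 3 + 3 * t ^ 2

/-- The kernel profile `a_d : [0,∞) → ℝ`:
`a_d(λ) = log(1/d) + a₀(λ/d) − a₀(1)` for `0 ≤ λ ≤ d`, and `a_d(λ) = log(1/λ)`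
for `λ ≥ d`. -/
def aKer (d l : ℝ) : ℝ :=
  if l ≤ d then Real.log (1 / d) + a0 (l / d) - a0 1 else Real.log (1 / l)

open Set

def tent (s u : ℝ) : ℝ := max (s - |u|) 0

lemma tent_nonneg (s u : ℝ) : 0 ≤ tent s u := le_max_right _ _

lemma tent_le_abs (s u : ℝ) : tent s u ≤ |s| :=
  max_le (by linarith [abs_nonneg u, le_abs_self s]) (abs_nonneg s)

lemma tent_eq_zero_of_le {s u : ℝ} (h : s ≤ |u|) : tent s u = 0 :=
  max_eq_right (by linarith)

lemma tent_abs (s u : ℝ) : tent s |u| = tent s u := by rw [tent, tent, abs_abs]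

@[fun_prop]
lemma Continuous.tent {α : Type*} [TopologicalSpace α] {f g : α → ℝ} (hf : Continuous f)
    (hg : Continuous g) : Continuous fun x => tent (f x) (g x) := by
  unfold _root_.tent
  fun_prop

lemma volume_real_Icc_inter_Icc (s x y : ℝ) :
    volume.real (Icc (x - s) x ∩ Icc (y - s) y) = tent s (x - y) := by
  rw [Icc_inter_Icc, Real.volume_real_Icc, tent]
  congr 1
  rcases le_total x y with h | h
  · rw [abs_of_nonpos (by linarith), max_eq_right (by linarith), min_eq_left h]; ring
  · rw [abs_of_nonneg (by linarith), max_eq_left (by linarith), min_eq_right h]; ring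

/-- The tent is the autocorrelation `∫ 1_{[z, z+s]}(x) 1_{[z, z+s]}(y) dz`, so the double
integral equals `∫ (∫_z^{z+s} f)² dz`. -/
theorem integral_tent_mul_nonneg (s : ℝ) {f : ℝ → ℝ} (hf : Integrable f) :
    0 ≤ ∫ p : ℝ × ℝ, tent s (p.1 - p.2) * f p.1 * f p.2 := by
  set w : ℝ → ℝ → ℝ := fun z x => (Icc (x - s) x).indicator (fun _ => f x) z
  have hw : ∀ (p : ℝ × ℝ) z, w z p.1 * w z p.2 =
      (Icc (p.1 - s) p.1 ∩ Icc (p.2 - s) p.2).indicator (fun _ => f p.1 * f p.2) z :=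
    fun p z => (inter_indicator_mul _ _ _).symm
  have hIcc : ∀ p : ℝ × ℝ, MeasurableSet (Icc (p.1 - s) p.1 ∩ Icc (p.2 - s) p.2) :=
    fun _ => measurableSet_Icc.inter measurableSet_Icc
  have hint : Integrable (Function.uncurry fun (p : ℝ × ℝ) z => w z p.1 * w z p.2)
      ((volume : Measure (ℝ × ℝ)).prod volume) := by
    have hmeas : AEStronglyMeasurable (Function.uncurry fun (p : ℝ × ℝ) z => w z p.1 * w z p.2)
        ((volume : Measure (ℝ × ℝ)).prod volume) := by
      have hE : MeasurableSet
          {q : (ℝ × ℝ) × ℝ | q.2 ∈ Icc (q.1.1 - s) q.1.1 ∩ Icc (q.1.2 - s) q.1.2} := by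
        simp only [mem_inter_iff, mem_Icc]
        measurability
      exact ((hf.1.comp_fst.mul hf.1.comp_snd).comp_fst.indicator hE).congr
        (ae_of_all _ fun q => (hw q.1 q.2).symm)
    refine (integrable_prod_iff hmeas).2 ⟨ae_of_all _ fun p => ?_, ?_⟩
    · simp only [Function.uncurry_apply_pair, hw]
      exact (integrable_indicator_iff (hIcc p)).2 (integrableOn_const
        ((measure_mono inter_subset_left).trans_lt measure_Icc_lt_top).ne)
    · simp only [Function.uncurry_apply_pair, hw, norm_indicator_eq_indicator_norm,
        integral_indicator_const _ (hIcc _), volume_real_Icc_inter_Icc, norm_mul, smul_eq_mul]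
      refine (hf.norm.mul_prod hf.norm).bdd_mul (c := |s|) (by fun_prop)
        (ae_of_all _ fun p => ?_)
      rw [Real.norm_of_nonneg (tent_nonneg _ _)]
      exact tent_le_abs s _
  calc 0 ≤ ∫ z, (∫ x, w z x) ^ 2 := integral_nonneg fun z => sq_nonneg _
    _ = ∫ z, ∫ p : ℝ × ℝ, w z p.1 * w z p.2 := by
      simp_rw [sq]
      exact integral_congr_ae (ae_of_all _ fun z => (integral_prod_mul (w z) (w z)).symm)
    _ = ∫ p : ℝ × ℝ, ∫ z, w z p.1 * w z p.2 := (integral_integral_swap hint).symm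
    _ = _ := by
      refine integral_congr_ae (ae_of_all _ fun p => ?_)
      simp only [hw, integral_indicator_const _ (hIcc _), volume_real_Icc_inter_Icc, smul_eq_mul,
        mul_assoc]

section TentMixture

variable {f : ℝ → ℝ} {ν : Measure ℝ}

lemma norm_tent_mul_le_indicator {C R : ℝ} (hC : ∀ x, ‖f x‖ ≤ C)
    (hR : ∀ x, f x ≠ 0 → x ∈ Icc (-R) R) (s : ℝ) (p : ℝ × ℝ) :
    ‖tent s (p.1 - p.2) * f p.1 * f p.2‖ ≤
      ((fun z : ℝ × ℝ => (z.1, z.2 - z.1)) ⁻¹' (Icc (-R) R ×ˢ Icc (-s) s)).indicator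
        (fun _ => |s| * C ^ 2) p := by
  have hC0 : 0 ≤ C := (norm_nonneg _).trans (hC 0)
  by_cases h0 : tent s (p.1 - p.2) * f p.1 * f p.2 = 0
  · rw [h0, norm_zero]
    exact indicator_nonneg (fun _ _ => by positivity) p
  have hf1 : f p.1 ≠ 0 := fun h => h0 (by rw [h]; ring)
  have hs : |p.2 - p.1| < s := by
    by_contra h
    exact h0 (by rw [tent_eq_zero_of_le (abs_sub_comm p.1 p.2 ▸ not_lt.1 h)]; ring)
  rw [abs_lt] at hs
  have hp : p ∈ (fun z : ℝ × ℝ => (z.1, z.2 - z.1)) ⁻¹' (Icc (-R) R ×ˢ Icc (-s) s) :=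
    mk_mem_prod (hR _ hf1) ⟨hs.1.le, hs.2.le⟩
  rw [indicator_of_mem hp, norm_mul, norm_mul, Real.norm_of_nonneg (tent_nonneg _ _), sq,
    ← mul_assoc]
  gcongr
  exacts [tent_le_abs _ _, hC _, hC _]

lemma exists_integral_norm_tent_mul_le (hf : Continuous f) (hsupp : HasCompactSupport f) :
    ∃ M, ∀ s, Integrable (fun p : ℝ × ℝ => tent s (p.1 - p.2) * f p.1 * f p.2) ∧
      ∫ p : ℝ × ℝ, ‖tent s (p.1 - p.2) * f p.1 * f p.2‖ ≤ M * s ^ 2 := by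
  obtain ⟨C, hC⟩ := hsupp.exists_bound_of_continuous hf
  obtain ⟨R, hR⟩ := hsupp.isBounded.subset_closedBall 0
  replace hR : ∀ x, f x ≠ 0 → x ∈ Icc (-R) R := fun x hx => by
    simpa [Real.closedBall_eq_Icc] using hR (subset_tsupport f hx)
  have hshear := measurePreserving_prod_sub (volume : Measure ℝ) volume
  refine ⟨volume.real (Icc (-R) R) * 2 * C ^ 2, fun s => ?_⟩
  set S := (fun z : ℝ × ℝ => (z.1, z.2 - z.1)) ⁻¹' (Icc (-R) R ×ˢ Icc (-s) s)
  have hSm : MeasurableSet S := hshear.measurable (measurableSet_Icc.prod measurableSet_Icc)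
  have hSvol : volume S = volume (Icc (-R) R ×ˢ Icc (-s) s) :=
    hshear.measure_preimage (measurableSet_Icc.prod measurableSet_Icc).nullMeasurableSet
  have hSint : Integrable (S.indicator fun _ => |s| * C ^ 2) :=
    (integrable_indicator_iff hSm).2 (integrableOn_const (by
      rw [hSvol]; exact (isCompact_Icc.prod isCompact_Icc).measure_lt_top.ne))
  have hint : Integrable (fun p : ℝ × ℝ => tent s (p.1 - p.2) * f p.1 * f p.2) :=
    hSint.mono' (by fun_prop) (ae_of_all _ (norm_tent_mul_le_indicator hC hR s))
  refine ⟨hint, ?_⟩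
  calc ∫ p : ℝ × ℝ, ‖tent s (p.1 - p.2) * f p.1 * f p.2‖
      ≤ ∫ p, S.indicator (fun _ => |s| * C ^ 2) p :=
        integral_mono hint.norm hSint (norm_tent_mul_le_indicator hC hR s)
    _ = volume.real (Icc (-R) R) * volume.real (Icc (-s) s) * (|s| * C ^ 2) := by
        rw [integral_indicator_const _ hSm, smul_eq_mul, measureReal_def, hSvol,
          ← measureReal_def, ← measureReal_prod_prod]
        rfl
    _ ≤ volume.real (Icc (-R) R) * (2 * |s|) * (|s| * C ^ 2) := by
        gcongr
        rw [Real.volume_real_Icc]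
        exact max_le (by linarith [neg_abs_le s, le_abs_self s]) (by positivity)
    _ = volume.real (Icc (-R) R) * 2 * C ^ 2 * s ^ 2 := by rw [← sq_abs s]; ring

lemma integrable_tent_of_integrable_sq (hν : Integrable (fun s => s ^ 2) ν) {u : ℝ}
    (hu : u ≠ 0) : Integrable (fun s => tent s u) ν := by
  refine (hν.div_const |u|).mono' (by fun_prop) (ae_of_all _ fun s => ?_)
  have hu' : 0 < |u| := abs_pos.2 hu
  rw [Real.norm_of_nonneg (tent_nonneg _ _), le_div_iff₀ hu']
  rcases le_or_gt s |u| with h | h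
  · rw [tent_eq_zero_of_le h, zero_mul]
    positivity
  · calc tent s u * |u| ≤ s * s := by
          gcongr
          exacts [(hu'.trans h).le, (tent_le_abs s u).trans_eq (abs_of_pos (hu'.trans h))]
      _ = s ^ 2 := by ring

lemma integrable_tent_mul_prod (hν : Integrable (fun s => s ^ 2) ν) (hf : Continuous f)
    (hsupp : HasCompactSupport f) :
    Integrable (Function.uncurry fun s (p : ℝ × ℝ) => tent s (p.1 - p.2) * f p.1 * f p.2)
      (ν.prod volume) := by
  obtain ⟨M, hM⟩ := exists_integral_norm_tent_mul_le hf hsupp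
  have hmeas : AEStronglyMeasurable
      (Function.uncurry fun s (p : ℝ × ℝ) => tent s (p.1 - p.2) * f p.1 * f p.2)
      (ν.prod volume) :=
    Continuous.aestronglyMeasurable (by unfold Function.uncurry; fun_prop)
  refine (integrable_prod_iff hmeas).2 ⟨ae_of_all _ fun s => (hM s).1, ?_⟩
  refine (hν.const_mul M).mono' hmeas.norm.integral_prod_right' (ae_of_all _ fun s => ?_)
  rw [Real.norm_of_nonneg (integral_nonneg fun _ => norm_nonneg _)]
  exact (hM s).2

variable [SFinite ν]

lemma integrable_integral_tent_mul (hν : Integrable (fun s => s ^ 2) ν) (hf : Continuous f)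
    (hsupp : HasCompactSupport f) :
    Integrable fun p : ℝ × ℝ => (∫ s, tent s (p.1 - p.2) ∂ν) * f p.1 * f p.2 := by
  simp_rw [← integral_mul_const]
  exact (integrable_tent_mul_prod hν hf hsupp).integral_prod_right

theorem integral_integral_tent_mul_nonneg (hν : Integrable (fun s => s ^ 2) ν)
    (hf : Continuous f) (hsupp : HasCompactSupport f) :
    0 ≤ ∫ p : ℝ × ℝ, (∫ s, tent s (p.1 - p.2) ∂ν) * f p.1 * f p.2 := by
  simp_rw [← integral_mul_const]
  rw [← integral_integral_swap (integrable_tent_mul_prod hν hf hsupp)]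
  exact integral_nonneg fun s =>
    integral_tent_mul_nonneg s (hf.integrable_of_hasCompactSupport hsupp)

end TentMixture

lemma hasDerivAt_a0 (t : ℝ) : HasDerivAt a0 (3 * t ^ 3 - 8 * t ^ 2 + 6 * t) t := by
  refine ((((hasDerivAt_pow 4 t).const_mul (3 / 4)).sub
    ((hasDerivAt_pow 3 t).const_mul (8 / 3))).add
    ((hasDerivAt_pow 2 t).const_mul 3)).congr_deriv ?_
  norm_num
  ring

lemma hasDerivAt_deriv_a0 (t : ℝ) :
    HasDerivAt (fun t => 3 * t ^ 3 - 8 * t ^ 2 + 6 * t) (9 * t ^ 2 - 16 * t + 6) t := by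
  refine ((((hasDerivAt_pow 3 t).const_mul 3).sub
    ((hasDerivAt_pow 2 t).const_mul 8)).add ((hasDerivAt_id t).const_mul 6)).congr_deriv ?_
  norm_num
  ring

/-- The second derivative of `log (1/s) - aKer d s` on `(0, d)`, as `a₀'' t = 9t² - 16t + 6`. -/
def tentDensity (d s : ℝ) : ℝ := 1 / s ^ 2 - (9 * (s / d) ^ 2 - 16 * (s / d) + 6) / d ^ 2

def tentMeasure (d : ℝ) : Measure ℝ :=
  (volume.restrict (Ioc 0 d)).withDensity (fun s => ENNReal.ofReal (tentDensity d s)) +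
    ENNReal.ofReal (2 / d) • Measure.dirac d

instance (d : ℝ) : SFinite (tentMeasure d) := by
  unfold tentMeasure
  infer_instance

section TentMeasure

variable {d : ℝ}

lemma sq_mul_tentDensity (hd : 0 < d) {s : ℝ} (hs : s ≠ 0) :
    s ^ 2 * tentDensity d s = 1 - (s / d) ^ 2 * (9 * (s / d) ^ 2 - 16 * (s / d) + 6) := by
  unfold tentDensity
  field_simp

lemma tentDensity_nonneg (hd : 0 < d) {s : ℝ} (hs : s ∈ Ioc 0 d) : 0 ≤ tentDensity d s := by
  have ht0 : 0 ≤ s / d := div_nonneg hs.1.le hd.le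
  have ht1 : s / d ≤ 1 := (div_le_one hd).2 hs.2
  have h : 0 ≤ s ^ 2 * tentDensity d s := by
    rw [sq_mul_tentDensity hd hs.1.ne']
    nlinarith [mul_nonneg (mul_nonneg ht0 ht0) (sub_nonneg.2 ht1), sq_nonneg (3 * (s / d) - 1),
      mul_nonneg ht0 (sub_nonneg.2 ht1), sq_nonneg (s / d * (3 * (s / d) - 1))]
  exact (mul_nonneg_iff_of_pos_left (pow_pos hs.1 2)).1 h

lemma measurable_tentDensity : Measurable (tentDensity d) := by
  unfold tentDensity
  fun_prop

lemma integrable_sq_tentMeasure (hd : 0 < d) :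
    Integrable (fun s => s ^ 2) (tentMeasure d) := by
  refine integrable_add_measure.2 ⟨?_, (integrable_dirac (by simp)).smul_measure (by simp)⟩
  rw [integrable_withDensity_iff_integrable_smul' measurable_tentDensity.ennreal_ofReal
    (ae_of_all _ fun _ => ENNReal.ofReal_lt_top)]
  refine IntegrableOn.congr_fun
    (f := fun s => 1 - (s / d) ^ 2 * (9 * (s / d) ^ 2 - 16 * (s / d) + 6))
    ((Continuous.integrableOn_Icc (by fun_prop)).mono_set Ioc_subset_Icc_self)
    (fun s hs => ?_) measurableSet_Ioc
  rw [ENNReal.toReal_ofReal (tentDensity_nonneg hd hs), smul_eq_mul, mul_comm,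
    sq_mul_tentDensity hd hs.1.ne']

lemma integral_tentMeasure (hd : 0 < d) {g : ℝ → ℝ} (hg : Integrable g (tentMeasure d)) :
    ∫ s, g s ∂tentMeasure d = (∫ s in Ioc 0 d, tentDensity d s * g s) + 2 / d * g d := by
  obtain ⟨hg₁, hg₂⟩ := integrable_add_measure.1 hg
  rw [tentMeasure, integral_add_measure hg₁ hg₂, integral_withDensity_eq_integral_toReal_smul
    measurable_tentDensity.ennreal_ofReal (ae_of_all _ fun _ => ENNReal.ofReal_lt_top),
    integral_smul_measure, integral_dirac, ENNReal.toReal_ofReal (by positivity : 0 ≤ 2 / d),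
    smul_eq_mul]
  congr 1
  refine setIntegral_congr_fun measurableSet_Ioc fun s hs => ?_
  rw [ENNReal.toReal_ofReal (tentDensity_nonneg hd hs), smul_eq_mul]

theorem integral_tentDensity_mul_sub (hd : 0 < d) {x : ℝ} (hx : 0 < x) (hxd : x ≤ d) :
    ∫ s in x..d, tentDensity d s * (s - x) =
      log (d / x) - a0 (x / d) + a0 1 - 2 * (1 - x / d) := by
  have hpos : ∀ s ∈ uIcc x d, s ≠ 0 := fun s hs =>
    (hx.trans_le (by rw [uIcc_of_le hxd] at hs; exact hs.1)).ne'
  have hderiv : ∀ s ∈ uIcc x d, HasDerivAt (fun s => log s + x * s⁻¹ + a0 (s / d) -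
      (s - x) / d * (3 * (s / d) ^ 3 - 8 * (s / d) ^ 2 + 6 * (s / d)))
      (tentDensity d s * (s - x)) s := by
    intro s hs
    have ht : HasDerivAt (fun s => s / d) (1 / d) s := by
      simpa using (hasDerivAt_id s).div_const d
    refine ((((hasDerivAt_log (hpos s hs)).add ((hasDerivAt_inv (hpos s hs)).const_mul x)).add
      ((hasDerivAt_a0 _).comp s ht)).sub ((((hasDerivAt_id s).sub_const x).div_const d).mul
      ((hasDerivAt_deriv_a0 _).comp s ht))).congr_deriv ?_
    have := hpos s hs
    simp only [Function.comp_apply, id, tentDensity]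
    field_simp
    ring
  have hcont : ContinuousOn (fun s => tentDensity d s * (s - x)) (uIcc x d) := fun s hs => by
    have := hpos s hs
    unfold tentDensity
    fun_prop (disch := positivity)
  rw [intervalIntegral.integral_eq_sub_of_hasDerivAt hderiv hcont.intervalIntegrable,
    div_self hd.ne', log_div hd.ne' hx.ne']
  field_simp
  ring

theorem setIntegral_tentDensity_mul_tent (hd : 0 < d) {x : ℝ} (hx : 0 < x) :
    (∫ s in Ioc 0 d, tentDensity d s * tent s x) + 2 / d * tent d x =
      log (1 / x) - aKer d x := by
  rcases le_or_gt d x with hdx | hxd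
  · have h0 : ∀ s ∈ Ioc 0 d, tentDensity d s * tent s x = 0 := fun s hs => by
      rw [tent_eq_zero_of_le (by rw [abs_of_pos hx]; exact hs.2.trans hdx), mul_zero]
    rw [setIntegral_congr_fun measurableSet_Ioc h0, integral_zero,
      tent_eq_zero_of_le (by rwa [abs_of_pos hx]), mul_zero, add_zero]
    rcases hdx.eq_or_lt with rfl | hlt
    · simp [aKer, div_self hd.ne']
    · simp [aKer, hlt.not_ge]
  · have htent : ∀ s, x ≤ s → tent s x = s - x := fun s hs => by
      rw [tent, abs_of_pos hx, max_eq_left (by linarith)]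
    rw [setIntegral_eq_of_subset_of_forall_sdiff_eq_zero measurableSet_Ioc
        (Ioc_subset_Ioc_left hx.le) (fun s hs => ?_),
      setIntegral_congr_fun measurableSet_Ioc (fun s hs => by rw [htent s hs.1.le]),
      ← intervalIntegral.integral_of_le hxd.le, integral_tentDensity_mul_sub hd hx hxd.le,
      htent d hxd.le, aKer, if_pos hxd.le, one_div, one_div, log_inv, log_inv,
      log_div hd.ne' hx.ne']
    · field_simp
      ring
    · have hsx : s ≤ x := not_lt.1 fun h => hs.2 ⟨h, hs.1.2⟩
      rw [tent_eq_zero_of_le (by rwa [abs_of_pos hx]), mul_zero]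

theorem integral_tent_tentMeasure (hd : 0 < d) {u : ℝ} (hu : u ≠ 0) :
    ∫ s, tent s u ∂tentMeasure d = log (1 / |u|) - aKer d |u| := by
  rw [integral_tentMeasure hd (integrable_tent_of_integrable_sq (integrable_sq_tentMeasure hd) hu),
    ← setIntegral_tentDensity_mul_tent hd (abs_pos.2 hu)]
  simp only [tent_abs]

end TentMeasure

lemma ae_fst_ne_snd : ∀ᵐ p : ℝ × ℝ, p.1 ≠ p.2 := by
  refine (Measure.ae_prod_mem_iff_ae_ae_mem
    (isClosed_eq continuous_fst continuous_snd).measurableSet.compl).2 (ae_of_all _ fun x => ?_)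
  simp [ae_iff]

/-- For `d > 0`, the kernel `log|λ−μ|⁻¹ − a_d(|λ−μ|)`, which
vanishes for `|λ−μ| ≥ d`, is positive semidefinite on continuous compactly
supported functions: `∫∫ [log(1/|λ−μ|) − a_d(|λ−μ|)] f(λ) f(μ) dλ dμ ≥ 0`. -/
theorem statement9 (d : ℝ) (hd : 0 < d) (f : ℝ → ℝ) (hf : Continuous f)
    (hsupp : HasCompactSupport f) :
    0 ≤ ∫ lam : ℝ, ∫ μ : ℝ,
        (Real.log (1 / |lam - μ|) - aKer d |lam - μ|) * f lam * f μ := by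
  have hK : ∀ᵐ p : ℝ × ℝ, (log (1 / |p.1 - p.2|) - aKer d |p.1 - p.2|) * f p.1 * f p.2 =
      (∫ s, tent s (p.1 - p.2) ∂tentMeasure d) * f p.1 * f p.2 := by
    filter_upwards [ae_fst_ne_snd] with p hp
    rw [integral_tent_tentMeasure hd (sub_ne_zero.2 hp)]
  have hint : Integrable (Function.uncurry fun lam μ : ℝ =>
      (log (1 / |lam - μ|) - aKer d |lam - μ|) * f lam * f μ) (volume.prod volume) :=
    (integrable_integral_tent_mul (integrable_sq_tentMeasure hd) hf hsupp).congr
      (hK.mono fun p hp => hp.symm)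
  rw [integral_integral hint, ← Measure.volume_eq_prod, integral_congr_ae hK]
  exact integral_integral_tent_mul_nonneg (integrable_sq_tentMeasure hd) hf hsupp
end
end

section
/- Let d > 0 and let f : (0,d] → [0,∞) be nonincreasing with λ ↦ λ f(λ) integrable on (0,d). Then for every k > 0 the integral ∫_0^d f(λ) sin(kλ) dλ converges absolutely and is ≥ 0. If moreover f is strictly decreasing on (0,d), the integral is strictly positive. -/
/-!
Let `g` be `f` extended by zero outside `(0,d]` and `p = π/k`. Since `sin(k(x + p)) = -sin(kx)`,
translating the negative part of `g(x) sin(kx)` by `p` turns it into the positive part of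
`g(x + p) sin(kx)`, so `∫ g(x) sin(kx) = ∫ (max (g(x) sin kx) 0 - max (g(x + p) sin kx) 0)`.
This integrand is nonnegative everywhere: for `x > 0` because `g(x + p) ≤ g(x)`, and for
`x ≤ 0` because `g(x) = 0` while `g(x + p) sin(kx) ≤ 0` (either `x + p ≤ 0` or
`kx ∈ (-π, 0]`).
If `f` is strictly decreasing, it is positive on `(0, min d p)`.
Absolute convergence comes from `|sin(kx)| ≤ |k| |x|`.
-/

open MeasureTheory Set Real

variable {f g : ℝ → ℝ} {k d : ℝ}

theorem MeasureTheory.Integrable.mul_sin_of_integrable_mul_self {μ : Measure ℝ}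
    (hf : AEStronglyMeasurable f μ) (hint : Integrable (fun x => x * f x) μ) (k : ℝ) :
    Integrable (fun x => f x * sin (k * x)) μ := by
  refine (hint.const_mul k).mono (hf.mul (by fun_prop)) (Filter.Eventually.of_forall fun x => ?_)
  calc ‖f x * sin (k * x)‖ ≤ |f x| * |k * x| := by
        rw [norm_mul, Real.norm_eq_abs, Real.norm_eq_abs]
        exact mul_le_mul_of_nonneg_left abs_sin_le_abs (abs_nonneg _)
    _ = ‖k * (x * f x)‖ := by rw [Real.norm_eq_abs, abs_mul, abs_mul, abs_mul]; ring

theorem max_shift_mul_sin_eq (hk : k ≠ 0) (x : ℝ) :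
    max (g (x + π / k) * sin (k * x)) 0 = max (-(g (x + π / k) * sin (k * (x + π / k)))) 0 := by
  rw [mul_add, mul_div_cancel₀ _ hk, sin_add_pi, mul_neg, neg_neg]

theorem MeasureTheory.Integrable.max_shift_mul_sin (hk : k ≠ 0)
    (hint : Integrable (fun x => g x * sin (k * x))) :
    Integrable (fun x => max (g (x + π / k) * sin (k * x)) 0) := by
  simp_rw [max_shift_mul_sin_eq hk]
  exact hint.neg_part.comp_add_right _

theorem integral_mul_sin_eq_integral_sub_shift (hk : k ≠ 0)
    (hint : Integrable (fun x => g x * sin (k * x))) :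
    ∫ x, g x * sin (k * x) =
      ∫ x, (max (g x * sin (k * x)) 0 - max (g (x + π / k) * sin (k * x)) 0) := by
  rw [integral_sub hint.pos_part (hint.max_shift_mul_sin hk)]
  simp_rw [max_shift_mul_sin_eq hk]
  rw [integral_add_right_eq_self (fun x => max (-(g x * sin (k * x))) 0),
    ← integral_sub hint.pos_part hint.neg_part]
  simp_rw [max_zero_sub_max_neg_zero_eq_self]

theorem max_shift_mul_sin_le (hk : 0 < k) (hg0 : ∀ x, 0 ≤ g x) (hg : ∀ x ≤ 0, g x = 0)
    (hanti : AntitoneOn g (Ioi 0)) (x : ℝ) :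
    max (g (x + π / k) * sin (k * x)) 0 ≤ max (g x * sin (k * x)) 0 := by
  rcases le_or_gt x 0 with hx | hx
  · rw [hg x hx, zero_mul, max_self, max_le_iff]
    refine ⟨?_, le_rfl⟩
    rcases le_or_gt (x + π / k) 0 with hxp | hxp
    · rw [hg _ hxp, zero_mul]
    have hkx : -π ≤ k * x := by
      have := mul_lt_mul_of_pos_left (neg_lt_iff_pos_add.2 hxp) hk
      rw [mul_neg, mul_div_cancel₀ _ hk.ne'] at this
      exact this.le
    exact mul_nonpos_of_nonneg_of_nonpos (hg0 _)
      (sin_nonpos_of_nonpos_of_neg_pi_le (mul_nonpos_of_nonneg_of_nonpos hk.le hx) hkx)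
  · rcases le_or_gt 0 (sin (k * x)) with hs | hs
    · refine max_le_max (mul_le_mul_of_nonneg_right ?_ hs) le_rfl
      exact hanti hx (mem_Ioi.2 (by positivity)) (le_add_of_nonneg_right (by positivity))
    · rw [max_eq_right (mul_nonpos_of_nonneg_of_nonpos (hg0 _) hs.le)]
      exact le_max_right _ _

theorem integral_mul_sin_nonneg (hk : 0 < k) (hg0 : ∀ x, 0 ≤ g x) (hg : ∀ x ≤ 0, g x = 0)
    (hanti : AntitoneOn g (Ioi 0))
    (hint : Integrable (fun x => g x * sin (k * x))) :
    0 ≤ ∫ x, g x * sin (k * x) := by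
  rw [integral_mul_sin_eq_integral_sub_shift hk.ne' hint]
  exact integral_nonneg fun x => sub_nonneg.2 (max_shift_mul_sin_le hk hg0 hg hanti x)

theorem integral_mul_sin_pos (hk : 0 < k) (hg0 : ∀ x, 0 ≤ g x) (hg : ∀ x ≤ 0, g x = 0)
    (hanti : AntitoneOn g (Ioi 0))
    (hint : Integrable (fun x => g x * sin (k * x))) (hd : 0 < d)
    (hlt : ∀ x ∈ Ioo 0 d, g (x + π / k) < g x) :
    0 < ∫ x, g x * sin (k * x) := by
  rw [integral_mul_sin_eq_integral_sub_shift hk.ne' hint, integral_pos_iff_support_of_nonneg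
    (fun x => sub_nonneg.2 (max_shift_mul_sin_le hk hg0 hg hanti x))
    (hint.pos_part.sub (hint.max_shift_mul_sin hk.ne'))]
  have hsupp : Ioo 0 (min d (π / k)) ⊆ Function.support
      fun x => max (g x * sin (k * x)) 0 - max (g (x + π / k) * sin (k * x)) 0 := by
    intro x ⟨hx0, hx⟩
    have hs : 0 < sin (k * x) := sin_pos_of_pos_of_lt_pi (by positivity)
      (by have := mul_lt_mul_of_pos_left (hx.trans_le (min_le_right _ _)) hk
          rwa [mul_div_cancel₀ _ hk.ne'] at this)
    have hmul := mul_lt_mul_of_pos_right (hlt x ⟨hx0, hx.trans_le (min_le_left _ _)⟩) hs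
    have hnn := mul_nonneg (hg0 (x + π / k)) hs.le
    rw [Function.mem_support, max_eq_left hnn, max_eq_left (hnn.trans hmul.le)]
    exact (sub_pos.2 hmul).ne'
  refine lt_of_lt_of_le ?_ (measure_mono hsupp)
  rw [Real.volume_Ioo]
  simp [hd, hk, pi_pos]

theorem antitoneOn_indicator_Ioc (hmono : AntitoneOn f (Ioc 0 d))
    (hnonneg : ∀ x ∈ Ioc 0 d, 0 ≤ f x) : AntitoneOn ((Ioc 0 d).indicator f) (Ioi 0) := by
  intro x hx y hy hxy
  by_cases hyd : y ≤ d
  · have hyd' : y ∈ Ioc 0 d := ⟨hy, hyd⟩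
    have hxd : x ∈ Ioc 0 d := ⟨hx, hxy.trans hyd⟩
    rw [indicator_of_mem hxd, indicator_of_mem hyd']
    exact hmono hxd hyd' hxy
  · rw [indicator_of_notMem fun h => hyd h.2]
    exact indicator_nonneg hnonneg x

theorem indicator_Ioc_lt_of_strictAntiOn (hmono : AntitoneOn f (Ioc 0 d))
    (hnonneg : ∀ x ∈ Ioc 0 d, 0 ≤ f x) (hstrict : StrictAntiOn f (Ioo 0 d)) {x y : ℝ}
    (hx : x ∈ Ioo 0 d) (hxy : x < y) : (Ioc 0 d).indicator f y < f x := by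
  have hm : (x + min y d) / 2 ∈ Ioo 0 d := by
    constructor
    · have := lt_min hxy hx.2; linarith [hx.1]
    · have := min_le_right y d; linarith [hx.2]
  have hxm : x < (x + min y d) / 2 := by have := lt_min hxy hx.2; linarith
  calc (Ioc 0 d).indicator f y
      ≤ (Ioc 0 d).indicator f ((x + min y d) / 2) :=
        antitoneOn_indicator_Ioc hmono hnonneg hm.1 (mem_Ioi.2 (hx.1.trans hxy))
          (by linarith [min_le_left y d])
    _ = f ((x + min y d) / 2) := indicator_of_mem (Ioo_subset_Ioc_self hm) f
    _ < f x := hstrict hx hm hxm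

/-- Let `d > 0` and `f : (0,d] → [0,∞)` be nonincreasing with
`λ ↦ λ f(λ)` integrable on `(0,d)`. Then for every `k > 0` the integral
`∫_0^d f(λ) sin(kλ) dλ` converges absolutely and is `≥ 0`; if moreover `f` is
strictly decreasing, the integral is strictly positive. -/
theorem statement13 (d : ℝ) (hd : 0 < d) (f : ℝ → ℝ)
    (hmono : AntitoneOn f (Ioc 0 d)) (hnonneg : ∀ lam ∈ Ioc (0 : ℝ) d, 0 ≤ f lam)
    (hint : IntegrableOn (fun lam => lam * f lam) (Ioo 0 d)) :
    ∀ k : ℝ, 0 < k →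
      IntegrableOn (fun lam => f lam * Real.sin (k * lam)) (Ioc 0 d) ∧
      0 ≤ (∫ lam in Ioc (0 : ℝ) d, f lam * Real.sin (k * lam)) ∧
      (StrictAntiOn f (Ioo 0 d) →
        0 < ∫ lam in Ioc (0 : ℝ) d, f lam * Real.sin (k * lam)) := by
  intro k hk
  have hfint : IntegrableOn (fun x => f x * sin (k * x)) (Ioc 0 d) :=
    Integrable.mul_sin_of_integrable_mul_self
      (aemeasurable_restrict_of_antitoneOn measurableSet_Ioc hmono).aestronglyMeasurable
      ((integrableOn_Ioc_iff_integrableOn_Ioo).2 hint) k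
  set g := (Ioc 0 d).indicator f
  have hg0 : ∀ x, 0 ≤ g x := indicator_nonneg hnonneg
  have hg : ∀ x ≤ 0, g x = 0 := fun x hx => indicator_of_notMem (fun h => hx.not_gt h.1) f
  have hanti := antitoneOn_indicator_Ioc hmono hnonneg
  have hindicator :
      (Ioc 0 d).indicator (fun x => f x * sin (k * x)) = fun x => g x * sin (k * x) :=
    funext fun x => indicator_mul_left _ _ _
  have hgint : Integrable (fun x => g x * sin (k * x)) := by
    rw [← hindicator]; exact hfint.integrable_indicator measurableSet_Ioc
  have heq : ∫ x in Ioc 0 d, f x * sin (k * x) = ∫ x, g x * sin (k * x) := by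
    rw [← integral_indicator measurableSet_Ioc, hindicator]
  refine ⟨hfint, heq ▸ integral_mul_sin_nonneg hk hg0 hg hanti hgint, fun hstrict => ?_⟩
  exact heq ▸ integral_mul_sin_pos hk hg0 hg hanti hgint hd fun x hx =>
    (indicator_Ioc_lt_of_strictAntiOn hmono hnonneg hstrict hx
      (lt_add_of_pos_right x (by positivity))).trans_eq
      (indicator_of_mem (Ioo_subset_Ioc_self hx) f).symm
end

section
/- Let d > 0 and a₀(t) = (3/4)t⁴ − (8/3)t³ + 3t². Then for every k > 0: ∫_0^d [ log(d/λ) − a₀(λ/d) + a₀(1) ] cos(kλ) dλ > 0. -/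
open Real

noncomputable section

/-!
Rescaling `λ = d t` reduces the claim to `d = 1` and the kernel
`K(t) = -log t - a₀(t) + a₀(1)` on `(0, 1]`. Integrating by parts twice against `cos (k t)`,
with antiderivatives `sin (k t) / k` and `(1 - cos (k t)) / k²`, gives
`∫₀¹ K(t) cos (k t) dt = g(1) (1 - cos k) / k² + k⁻² ∫₀¹ K''(t) (1 - cos (k t)) dt`,
where `g = -K'`: the boundary terms vanish at `1` because `K(1) = 0` and at `0` because
`t log t → 0`. Now `g(1) = 2` and `t² K''(t) = 1 - 6t² + 16t³ - 9t⁴ > 0` on `[0, 1]`, while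
`1 - cos (k t) > 0` for small `t > 0`, so the right-hand side is positive.
-/

open Set Filter MeasureTheory intervalIntegral Topology

theorem Real.mul_sinc (x : ℝ) : x * sinc x = sin x := by
  rcases eq_or_ne x 0 with rfl | hx
  · simp
  rw [sinc_of_ne_zero hx, mul_div_cancel₀ _ hx]

theorem Real.one_sub_cos_eq_sq_mul_sinc_sq (x : ℝ) :
    1 - cos x = x ^ 2 / 2 * sinc (x / 2) ^ 2 := by
  rcases eq_or_ne x 0 with rfl | hx
  · simp
  rw [sinc_of_ne_zero (by positivity), div_pow, sin_sq_eq_half_sub]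
  field_simp

theorem Real.one_sub_cos_pos {x : ℝ} (hx : 0 < x) (hxπ : x ≤ π) : 0 < 1 - cos x := by
  simpa using cos_lt_cos_of_nonneg_of_le_pi le_rfl hxπ hx

section CosineTransform

variable {K g h : ℝ → ℝ} {d k : ℝ}

theorem integral_mul_one_sub_cos_pos (hd : 0 < d) (hk : 0 < k) (hh : ∀ x ∈ Ioc 0 d, 0 < h x)
    (hint : IntervalIntegrable (fun x => h x * (1 - cos (k * x))) volume 0 d) :
    0 < ∫ x in 0..d, h x * (1 - cos (k * x)) := by
  have hψ : ∀ x ∈ Ioc 0 d, 0 ≤ h x * (1 - cos (k * x)) := fun x hx =>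
    mul_nonneg (hh x hx).le (by linarith [cos_le_one (k * x)])
  rw [integral_pos_iff_support_of_nonneg_ae' ?_ hint]
  · refine ⟨hd, ?_⟩
    set m := min d (π / k)
    have hm : 0 < m := lt_min hd (by positivity)
    have hsub : Ioo 0 m ⊆ Function.support (fun x => h x * (1 - cos (k * x))) ∩ Ioc 0 d := by
      intro x ⟨hx0, hxm⟩
      have hxd : x ∈ Ioc 0 d := ⟨hx0, hxm.le.trans (min_le_left _ _)⟩
      have hkx : k * x ≤ π := by
        have := hxm.le.trans (min_le_right d (π / k))
        rwa [le_div_iff₀ hk, mul_comm] at this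
      exact ⟨(mul_pos (hh x hxd) (one_sub_cos_pos (by positivity) hkx)).ne', hxd⟩
    calc (0 : ENNReal) < volume (Ioo 0 m) := by simpa using hm
      _ ≤ _ := measure_mono hsub
  · rw [uIoc_of_le hd.le]
    exact (ae_restrict_mem measurableSet_Ioc).mono fun x hx => hψ x hx

theorem integral_mul_cos_eq (hd : 0 < d) (hk : k ≠ 0)
    (hK : ∀ x ∈ Ioc 0 d, HasDerivAt K (-g x) x) (hg : ∀ x ∈ Ioc 0 d, HasDerivAt g (-h x) x)
    (hK0 : Tendsto (fun x => K x * sin (k * x)) (𝓝[>] 0) (𝓝 0))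
    (hg0 : Tendsto (fun x => g x * (1 - cos (k * x))) (𝓝[>] 0) (𝓝 0))
    (hKi : IntervalIntegrable (fun x => K x * cos (k * x)) volume 0 d)
    (hhi : IntervalIntegrable (fun x => h x * (1 - cos (k * x))) volume 0 d) :
    ∫ x in 0..d, K x * cos (k * x) = K d * sin (k * d) / k + g d * (1 - cos (k * d)) / k ^ 2
      + (∫ x in 0..d, h x * (1 - cos (k * x))) / k ^ 2 := by
  set Φ := fun x => K x * sin (k * x) / k + g x * (1 - cos (k * x)) / k ^ 2
  have hΦ : ∀ x ∈ Ioc 0 d,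
      HasDerivAt Φ (K x * cos (k * x) - h x * (1 - cos (k * x)) / k ^ 2) x := by
    intro x hx
    have hsin : HasDerivAt (fun y => sin (k * y)) (cos (k * x) * k) x := by
      simpa using ((hasDerivAt_id x).const_mul k).sin
    have hcos : HasDerivAt (fun y => 1 - cos (k * y)) (sin (k * x) * k) x := by
      simpa using ((hasDerivAt_id x).const_mul k).cos.const_sub 1
    refine ((((hK x hx).mul hsin).div_const k).add
      (((hg x hx).mul hcos).div_const (k ^ 2))).congr_deriv ?_
    field_simp
    ring
  have hΦ0 : Tendsto Φ (𝓝[>] 0) (𝓝 0) := by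
    simpa using (hK0.div_const k).add (hg0.div_const (k ^ 2))
  have hΦd : Tendsto Φ (𝓝[<] d) (𝓝 (Φ d)) :=
    (hΦ d ⟨hd, le_rfl⟩).continuousAt.tendsto.mono_left nhdsWithin_le_nhds
  have hFTC := integral_eq_sub_of_hasDerivAt_of_tendsto hd
    (fun x hx => hΦ x (Ioo_subset_Ioc_self hx)) (hKi.sub (hhi.div_const _)) hΦ0 hΦd
  rw [integral_sub hKi (hhi.div_const _), intervalIntegral.integral_div] at hFTC
  linear_combination hFTC

theorem integral_mul_cos_pos (hd : 0 < d) (hk : 0 < k)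
    (hK : ∀ x ∈ Ioc 0 d, HasDerivAt K (-g x) x) (hg : ∀ x ∈ Ioc 0 d, HasDerivAt g (-h x) x)
    (hKd : K d = 0) (hgd : 0 ≤ g d) (hh : ∀ x ∈ Ioc 0 d, 0 < h x)
    (hK0 : Tendsto (fun x => K x * sin (k * x)) (𝓝[>] 0) (𝓝 0))
    (hg0 : Tendsto (fun x => g x * (1 - cos (k * x))) (𝓝[>] 0) (𝓝 0))
    (hKi : IntervalIntegrable (fun x => K x * cos (k * x)) volume 0 d)
    (hhi : IntervalIntegrable (fun x => h x * (1 - cos (k * x))) volume 0 d) :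
    0 < ∫ x in 0..d, K x * cos (k * x) := by
  rw [integral_mul_cos_eq hd hk.ne' hK hg hK0 hg0 hKi hhi, hKd, zero_mul, zero_div, zero_add]
  have hψ := integral_mul_one_sub_cos_pos hd hk hh hhi
  have hcos : 0 ≤ 1 - cos (k * d) := by linarith [cos_le_one (k * d)]
  positivity

end CosineTransform

def logKernel (t : ℝ) : ℝ := -log t - a0 t + a0 1

def logKernelNegDeriv (t : ℝ) : ℝ := t⁻¹ + (3 * t ^ 3 - 8 * t ^ 2 + 6 * t)

def logKernelSecondDeriv (t : ℝ) : ℝ := (t ^ 2)⁻¹ - (9 * t ^ 2 - 16 * t + 6)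

theorem continuous_a0 : Continuous a0 := by
  unfold a0
  fun_prop

theorem hasDerivAt_logKernel {t : ℝ} (ht : t ≠ 0) :
    HasDerivAt logKernel (-logKernelNegDeriv t) t := by
  have ha0 : HasDerivAt a0 (3 * t ^ 3 - 8 * t ^ 2 + 6 * t) t := by
    refine ((((hasDerivAt_pow 4 t).const_mul (3 / 4)).sub
      ((hasDerivAt_pow 3 t).const_mul (8 / 3))).add
        ((hasDerivAt_pow 2 t).const_mul 3)).congr_deriv ?_
    norm_num
    ring
  refine (((hasDerivAt_log ht).neg.sub ha0).add_const (a0 1)).congr_deriv ?_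
  rw [logKernelNegDeriv]
  ring

theorem hasDerivAt_logKernelNegDeriv {t : ℝ} (ht : t ≠ 0) :
    HasDerivAt logKernelNegDeriv (-logKernelSecondDeriv t) t := by
  have hp : HasDerivAt (fun t : ℝ => 3 * t ^ 3 - 8 * t ^ 2 + 6 * t)
      (9 * t ^ 2 - 16 * t + 6) t := by
    refine ((((hasDerivAt_pow 3 t).const_mul 3).sub ((hasDerivAt_pow 2 t).const_mul 8)).add
      ((hasDerivAt_id t).const_mul 6)).congr_deriv ?_
    norm_num
    ring
  refine ((hasDerivAt_inv ht).add hp).congr_deriv ?_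
  rw [logKernelSecondDeriv]
  ring

theorem logKernelSecondDeriv_pos {t : ℝ} (ht : 0 < t) (ht1 : t ≤ 1) :
    0 < logKernelSecondDeriv t := by
  have hp : 0 < 1 - t ^ 2 * (9 * t ^ 2 - 16 * t + 6) := by
    nlinarith [sq_nonneg (3 * t - 1), mul_nonneg ht.le (sub_nonneg.2 ht1), sq_nonneg t]
  have : logKernelSecondDeriv t = (1 - t ^ 2 * (9 * t ^ 2 - 16 * t + 6)) / t ^ 2 := by
    rw [logKernelSecondDeriv]
    field_simp
  rw [this]
  positivity

-- Through `sinc`, the singular factors `log t` and `t⁻¹` turn into continuous functions.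
theorem tendsto_logKernel_mul_sin (k : ℝ) :
    Tendsto (fun t => logKernel t * sin (k * t)) (𝓝[>] 0) (𝓝 0) := by
  have heq : (fun t => logKernel t * sin (k * t)) =
      fun t => -k * (t * log t) * sinc (k * t) + (a0 1 - a0 t) * sin (k * t) := by
    funext t
    rw [logKernel, ← mul_sinc]
    ring
  have hc : Continuous fun t => -k * (t * log t) * sinc (k * t) + (a0 1 - a0 t) * sin (k * t) := by
    have := continuous_a0
    fun_prop
  rw [heq]
  simpa using hc.continuousAt.tendsto.mono_left (nhdsWithin_le_nhds (a := (0 : ℝ)))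

theorem tendsto_logKernelNegDeriv_mul_one_sub_cos (k : ℝ) :
    Tendsto (fun t => logKernelNegDeriv t * (1 - cos (k * t))) (𝓝[>] 0) (𝓝 0) := by
  have heq : (fun t => logKernelNegDeriv t * (1 - cos (k * t))) = fun t =>
      k ^ 2 / 2 * t * sinc (k * t / 2) ^ 2 +
        (3 * t ^ 3 - 8 * t ^ 2 + 6 * t) * (1 - cos (k * t)) := by
    funext t
    rw [logKernelNegDeriv, one_sub_cos_eq_sq_mul_sinc_sq]
    rcases eq_or_ne t 0 with rfl | ht
    · simp
    · field_simp
  rw [heq]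
  simpa using ((by fun_prop : Continuous fun t : ℝ => k ^ 2 / 2 * t * sinc (k * t / 2) ^ 2 +
    (3 * t ^ 3 - 8 * t ^ 2 + 6 * t) * (1 - cos (k * t))).tendsto 0).mono_left nhdsWithin_le_nhds

theorem intervalIntegrable_logKernel_mul_cos (k : ℝ) :
    IntervalIntegrable (fun t => logKernel t * cos (k * t)) volume 0 1 := by
  have hK : IntervalIntegrable logKernel volume 0 1 :=
    (intervalIntegrable_log'.neg.sub (continuous_a0.intervalIntegrable 0 1)).add
      intervalIntegrable_const
  exact hK.mul_continuousOn (by fun_prop)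

theorem intervalIntegrable_logKernelSecondDeriv_mul_one_sub_cos (k : ℝ) :
    IntervalIntegrable (fun t => logKernelSecondDeriv t * (1 - cos (k * t))) volume 0 1 := by
  have heq : EqOn (fun t => logKernelSecondDeriv t * (1 - cos (k * t)))
      (fun t => k ^ 2 / 2 * sinc (k * t / 2) ^ 2 - (9 * t ^ 2 - 16 * t + 6) * (1 - cos (k * t)))
      (uIoc 0 1) := by
    intro t ht
    have ht0 : t ≠ 0 := (uIoc_of_le (zero_le_one' ℝ) ▸ ht).1.ne'
    dsimp only
    rw [logKernelSecondDeriv, one_sub_cos_eq_sq_mul_sinc_sq]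
    field_simp
  exact (intervalIntegrable_congr heq).2 (Continuous.intervalIntegrable (by fun_prop) 0 1)

theorem integral_logKernel_mul_cos_pos {k : ℝ} (hk : 0 < k) :
    0 < ∫ t in 0..1, logKernel t * cos (k * t) :=
  integral_mul_cos_pos one_pos hk (fun t ht => hasDerivAt_logKernel ht.1.ne')
    (fun t ht => hasDerivAt_logKernelNegDeriv ht.1.ne') (by simp [logKernel])
    (by norm_num [logKernelNegDeriv]) (fun t ht => logKernelSecondDeriv_pos ht.1 ht.2)
    (tendsto_logKernel_mul_sin k) (tendsto_logKernelNegDeriv_mul_one_sub_cos k)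
    (intervalIntegrable_logKernel_mul_cos k)
    (intervalIntegrable_logKernelSecondDeriv_mul_one_sub_cos k)

/-- For every `d > 0` and every `k > 0`:
`∫_0^d [log(d/λ) − a₀(λ/d) + a₀(1)] cos(kλ) dλ > 0`. -/
theorem statement14 (d : ℝ) (hd : 0 < d) (k : ℝ) (hk : 0 < k) :
    0 < ∫ lam in (0 : ℝ)..d,
        (Real.log (d / lam) - a0 (lam / d) + a0 1) * Real.cos (k * lam) := by
  have hrescale : ∀ lam, (Real.log (d / lam) - a0 (lam / d) + a0 1) * Real.cos (k * lam) =
      logKernel (lam / d) * cos (k * d * (lam / d)) := by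
    intro lam
    rw [logKernel, ← inv_div, Real.log_inv, mul_assoc, mul_div_cancel₀ _ hd.ne']
  simp_rw [hrescale]
  rw [integral_comp_div (fun t => logKernel t * cos (k * d * t)) hd.ne', zero_div, div_self hd.ne']
  exact smul_pos hd (integral_logKernel_mul_cos_pos (mul_pos hk hd))
end
end
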